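/- arXiv:2503.11424 — 11 statements merged into one kernel-verified Lean document; each statement's English description precedes it below -/
import Mathlib

section
/- Let I be a monomial ideal generated by monomials all of the same degree, and suppose I has linear quotients. Then for any monomial m, the ideal I^{≤m}, generated by all minimal monomial generators of I that divide m, also has linear quotients. -/
/-- The successive-colon (linear quotients) condition for a given ordering of the
minimal generators (monomials, encoded as multisets of variable indices) of a
monomial ideal generated in a single degree: for all `i < j` there is `p < j`
with `(m_p : m_j)` generated by a single variable `v` dividing `m_i/gcd(m_i,m_j)`. -/
def MLQList (L : List (Multiset ℕ)) : Prop :=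
  ∀ i j : Fin L.length, i < j →
    ∃ p : Fin L.length, p < j ∧ ∃ v : ℕ,
      L.get p - L.get j = {v} ∧ v ∈ L.get i - L.get j

/-- A set of monomials (generators of an equigenerated monomial ideal) has linear
quotients: some linear order of the generators works. -/
def MHasLQ (S : Set (Multiset ℕ)) : Prop :=
  ∃ L : List (Multiset ℕ), L.Nodup ∧ (∀ u, u ∈ L ↔ u ∈ S) ∧ MLQList L

/-- `g >_lex f` for monomials with variable order `x₁ > x₂ > ⋯`. -/
def mlexGt (g f : Multiset ℕ) : Prop :=
  List.Lex (· < ·) (g.sort (· ≤ ·)) (f.sort (· ≤ ·))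

/-!
Restrict the given linear-quotient order of `I` to the generators dividing `m`. If `m_i, m_j`
divide `m` and `m_p : m_j = (x_v)` with `x_v` dividing `m_i / gcd(m_i, m_j)`, then
`m_p` divides `x_v m_j`, which divides `lcm(m_i, m_j)` and hence `m`; so the same witness
`m_p` survives in the restricted list.
-/

theorem Multiset.le_union_of_sub_eq_singleton {α : Type*} [DecidableEq α] {a b c : Multiset α}
    {v : α} (hab : a - b = {v}) (hv : v ∈ c - b) : a ≤ b ∪ c := by
  calc a ≤ a - b + b := le_tsub_add
    _ = v ::ₘ b := by rw [hab, Multiset.singleton_add]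
    _ ≤ b ∪ c := by
      rw [Multiset.mem_sub] at hv
      refine Multiset.le_iff_count.mpr fun x => ?_
      rw [Multiset.count_cons, Multiset.count_union]
      split_ifs with hx
      · subst hx; omega
      · omega

theorem MLQList.filter_le {L : List (Multiset ℕ)} (hnd : L.Nodup) (hL : MLQList L)
    (m : Multiset ℕ) : MLQList (L.filter (· ≤ m)) := by
  obtain ⟨f, hf⟩ :=
    List.sublist_iff_exists_fin_orderEmbedding_get_eq.mp (L.filter_sublist (p := (· ≤ m)))
  have hle : ∀ i, (L.filter (· ≤ m)).get i ≤ m := fun i => by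
    simpa using (List.mem_filter.mp (List.get_mem _ i)).2
  intro i j hij
  obtain ⟨p, hpj, v, hpv, hvi⟩ := hL (f i) (f j) (f.lt_iff_lt.mpr hij)
  simp only [← hf] at hpv hvi
  have hpm : L.get p ≤ m :=
    (Multiset.le_union_of_sub_eq_singleton hpv hvi).trans (Multiset.union_le (hle j) (hle i))
  have hp_mem : L.get p ∈ L.filter (· ≤ m) :=
    List.mem_filter.mpr ⟨L.get_mem p, decide_eq_true hpm⟩
  obtain ⟨p', hp'⟩ := List.get_of_mem hp_mem
  have hfp' : f p' = p := hnd.get_inj_iff.mp (by rw [← hf, hp'])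
  refine ⟨p', f.lt_iff_lt.mp (hfp' ▸ hpj), v, ?_, hvi⟩
  rwa [hp']

theorem LQ_restriction_general (S : Set (Multiset ℕ)) (h : MHasLQ S) (m : Multiset ℕ) :
    MHasLQ {u | u ∈ S ∧ u ≤ m} := by
  obtain ⟨L, hnd, hmem, hL⟩ := h
  exact ⟨L.filter (· ≤ m), hnd.filter _, fun u => by simp [hmem], hL.filter_le hnd m⟩

/-- If a monomial ideal generated in a single degree has linear
quotients, then so does its restriction `I^{≤m}` to the generators dividing a
monomial `m`. -/
theorem LQ_restriction (S : Set (Multiset ℕ)) (d : ℕ)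
    (hdeg : ∀ u ∈ S, Multiset.card u = d) (h : MHasLQ S) (m : Multiset ℕ) :
    MHasLQ {u | u ∈ S ∧ u ≤ m} :=
  LQ_restriction_general S h m
end

section
/- For each n ≥ 6 and r ≥ 0, the ordering x_1 > x_2 > ··· > x_{n+r} is a perfect elimination ordering for the graph LH_{n,r}; in particular LH_{n,r} is chordal. Consequently H_n = LH_{n,0} is chordal with perfect elimination ordering x_1 > ··· > x_n. -/
open Finset

/-- Edge relation of the graph `Hₙ` (one orientation). -/
def HE (n a b : ℕ) : Prop :=
  (1 ≤ a ∧ a ≤ n - 5 ∧ b = a + 1) ∨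
  (a = n - 4 ∧ b = n - 2) ∨ (a = n - 2 ∧ b = n - 3) ∨
  (a = n - 1 ∧ 2 ≤ b ∧ b ≤ n ∧ b ≠ n - 1) ∨
  (a = n ∧ 1 ≤ b ∧ b ≤ n ∧ b ≠ n - 3 ∧ b ≠ n)

/-- Edge relation of the graph `Hₙ` (symmetrized). -/
def Hedge (n a b : ℕ) : Prop := HE n a b ∨ HE n b a

def LHE (n r a b : ℕ) : Prop :=
  (n + 1 ≤ a ∧ a ≤ n + r ∧ 1 ≤ b ∧ b ≤ n ∧ b ≠ n - 3) ∨
  (n + 1 ≤ a ∧ a ≤ n + r ∧ n + 1 ≤ b ∧ b ≤ n + r ∧ a ≠ b)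

/-- Edge relation of `LH_{n,r}`. -/
def LHedge (n r a b : ℕ) : Prop := Hedge n a b ∨ LHE n r a b ∨ LHE n r b a

/-- Edge relation of `CH_{n,r}`: a shifted copy of `Hₙ` on `{r+1,…,r+n}`,
a clique on `{1,…,r}`, each clique vertex joined to `x_{r+n-1}` and `x_{r+n}`. -/
def CHedge (n r a b : ℕ) : Prop :=
  (r < a ∧ r < b ∧ Hedge n (a - r) (b - r)) ∨
  (1 ≤ a ∧ a ≤ r ∧ 1 ≤ b ∧ b ≤ r ∧ a ≠ b) ∨
  (1 ≤ a ∧ a ≤ r ∧ (b = r + n - 1 ∨ b = r + n)) ∨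
  (1 ≤ b ∧ b ≤ r ∧ (a = r + n - 1 ∨ a = r + n))

/-- Edge relation of `ACH_{n,r}`: `CH_{n,r}` plus edges from `{1,…,r}` to `x_{r+n-2}`. -/
def ACHedge (n r a b : ℕ) : Prop :=
  CHedge n r a b ∨ (1 ≤ a ∧ a ≤ r ∧ b = r + n - 2) ∨ (1 ≤ b ∧ b ≤ r ∧ a = r + n - 2)

/-- Minimal generators (as squarefree supports) of the `k`-th homological shift ideal
`HS_k(I(G^c))` of the edge ideal of the complement of a graph `G` with edge relation `E`
on vertex set `V`, whose natural order is a perfect elimination ordering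
(Herzog–Moradi–Rahimbeigi–Zhu description). -/
def hsGens (E : ℕ → ℕ → Prop) (V : Finset ℕ) (k : ℕ) : Set (Finset ℕ) :=
  {h | h ⊆ V ∧ h.card = k + 2 ∧
    ∃ t ∈ h, (∃ l ∈ h, t < l) ∧ ∀ l ∈ h, t < l → ¬ E t l}

/-- The successive-colon (linear quotients) condition for a given ordering of the
minimal generators of a squarefree monomial ideal generated in one degree. -/
def LQList (L : List (Finset ℕ)) : Prop :=
  ∀ i j : Fin L.length, i < j →
    ∃ p : Fin L.length, p < j ∧ ∃ v : ℕ,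
      L.get p \ L.get j = {v} ∧ v ∈ L.get i \ L.get j

/-- A finite set of squarefree monomials (generators of an equigenerated monomial ideal)
has linear quotients: some linear order of the generators works. -/
def HasLQ (S : Set (Finset ℕ)) : Prop :=
  ∃ L : List (Finset ℕ), L.Nodup ∧ (∀ h, h ∈ L ↔ h ∈ S) ∧ LQList L

/-- `g >_lex f` for squarefree monomials with variable order `x₁ > x₂ > ⋯`. -/
def lexGt (g f : Finset ℕ) : Prop :=
  List.Lex (· < ·) (g.sort (· ≤ ·)) (f.sort (· ≤ ·))

def fmax (h : Finset ℕ) : ℕ := h.sup id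
noncomputable def fmin (h : Finset ℕ) : ℕ := sInf (↑h : Set ℕ)
def smax (h : Finset ℕ) : ℕ := (h.erase (fmax h)).sup id

/-- The natural order on vertices is a perfect elimination ordering. -/
def IsPEO (E : ℕ → ℕ → Prop) (V : Finset ℕ) : Prop :=
  ∀ i ∈ V, ∀ j ∈ V, ∀ l ∈ V, i < j → i < l → j ≠ l → E i j → E i l → E j l

/-- A graph on `V` is chordal iff some relabeling of the vertices is a perfect
elimination ordering. -/
def ChordalOn (E : ℕ → ℕ → Prop) (V : Finset ℕ) : Prop :=
  ∃ π : ℕ → ℕ, Set.BijOn π ↑V ↑V ∧ IsPEO (fun a b => E (π a) (π b)) V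

set_option maxHeartbeats 1000000 in
lemma LH_edge_iff (m r a b : ℕ) (h1 : 1 ≤ a) (h2 : a < b) (h3 : b ≤ m + 6 + r) :
    LHedge (m + 6) r a b ↔
      ((a ≤ m + 1 ∧ b = a + 1) ∨ (a = m + 2 ∧ b = m + 4) ∨ (a = m + 3 ∧ b = m + 4) ∨
       (2 ≤ a ∧ b = m + 5) ∨ (b = m + 6 ∧ a ≠ m + 3) ∨ (m + 7 ≤ b ∧ a ≠ m + 3)) := by
  simp only [LHedge, Hedge, HE, LHE,
    show m+6-5 = m+1 from rfl, show m+6-4 = m+2 from rfl,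
    show m+6-3 = m+3 from rfl, show m+6-2 = m+4 from rfl,
    show m+6-1 = m+5 from rfl]
  omega

lemma LHedge_symm {n r a b : ℕ} (h : LHedge n r a b) : LHedge n r b a := by
  rcases h with (h | h) | h | h
  · exact Or.inl (Or.inr h)
  · exact Or.inl (Or.inl h)
  · exact Or.inr (Or.inr h)
  · exact Or.inr (Or.inl h)

lemma LH_isPEO (m r : ℕ) : IsPEO (LHedge (m + 6) r) (Finset.Icc 1 (m + 6 + r)) := by
  intro i hi j hj l hl hij hil hjl e1 e2
  simp only [Finset.mem_Icc] at hi hj hl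
  rw [LH_edge_iff m r i j hi.1 hij hj.2] at e1
  rw [LH_edge_iff m r i l hi.1 hil hl.2] at e2
  rcases Nat.lt_or_ge j l with h | h
  · rw [LH_edge_iff m r j l hj.1 h hl.2]
    omega
  · have h' : l < j := by omega
    have key : LHedge (m + 6) r l j := by
      rw [LH_edge_iff m r l j hl.1 h' hj.2]
      omega
    exact LHedge_symm key

lemma LHedge_zero {n a b : ℕ} : LHedge n 0 a b ↔ Hedge n a b := by
  constructor
  · rintro ((h | h) | (h | h) | (h | h))
    · exact Or.inl h
    · exact Or.inr h
    all_goals exact absurd h.2.1 (by omega)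
  · exact Or.inl

/-- For `n ≥ 6`, `r ≥ 0`, the ordering `x₁ > ⋯ > x_{n+r}` is a perfect
elimination ordering of `LH_{n,r}`; in particular `LH_{n,r}` is chordal. Consequently
`Hₙ = LH_{n,0}` is chordal with perfect elimination ordering `x₁ > ⋯ > xₙ`. -/
theorem LH_peo (n r : ℕ) (hn : 6 ≤ n) :
    IsPEO (LHedge n r) (Finset.Icc 1 (n + r)) ∧ ChordalOn (LHedge n r) (Finset.Icc 1 (n + r)) ∧
    IsPEO (Hedge n) (Finset.Icc 1 n) ∧ ChordalOn (Hedge n) (Finset.Icc 1 n) := by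
  obtain ⟨m, rfl⟩ : ∃ m, n = m + 6 := ⟨n - 6, by omega⟩
  have h1 : IsPEO (LHedge (m + 6) r) (Finset.Icc 1 (m + 6 + r)) := LH_isPEO m r
  have h2 : IsPEO (Hedge (m + 6)) (Finset.Icc 1 (m + 6)) := by
    intro i hi j hj l hl hij hil hjl e1 e2
    have hi0 : i ∈ Finset.Icc 1 (m + 6 + 0) := hi
    have hj0 : j ∈ Finset.Icc 1 (m + 6 + 0) := hj
    have hl0 : l ∈ Finset.Icc 1 (m + 6 + 0) := hl
    exact LHedge_zero.mp (LH_isPEO m 0 i hi0 j hj0 l hl0 hij hil hjl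
      (LHedge_zero.mpr e1) (LHedge_zero.mpr e2))
  exact ⟨h1, ⟨id, Set.bijOn_id _, h1⟩, h2, ⟨id, Set.bijOn_id _, h2⟩⟩
end

section
/- For each n ≥ 6 and r ≥ 0, the ordering x_1 > x_2 > ··· > x_{n+r} is a perfect elimination ordering for both of the graphs CH_{n,r} and ACH_{n,r}; in particular both graphs are chordal. -/
open Finset

lemma Hsymm (n b c : ℕ) (h : Hedge n c b) : Hedge n b c := h.elim Or.inr Or.inl

lemma LFIN (n : ℕ) (hn : 6 ≤ n) : ∀ b c : ℕ, 1 ≤ b → b < c → c ≤ n →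
    ((b + 1 = c ∧ b ≤ n - 5) ∨ (b = n - 3 ∧ c = n - 2) ∨ (b = n - 4 ∧ c = n - 2) ∨
     (2 ≤ b ∧ b ≤ n - 2 ∧ c = n - 1) ∨ (1 ≤ b ∧ b ≠ n - 3 ∧ c = n)) → Hedge n b c := by
  intro b c hb1 hbc hcn h
  rcases h with ⟨h1, h2⟩ | ⟨h1, h2⟩ | ⟨h1, h2⟩ | ⟨h1, h2, h3⟩ | ⟨h1, h2, h3⟩
  · exact Or.inl (by unfold HE; omega)
  · exact Or.inr (by unfold HE; omega)
  · exact Or.inl (by unfold HE; omega)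
  · exact Or.inr (by unfold HE; omega)
  · exact Or.inr (by unfold HE; omega)

lemma key2 (n : ℕ) (hn : 6 ≤ n) (b c : ℕ) (hne : b ≠ c)
    (h1 : b = n - 2 ∨ b = n - 1 ∨ b = n) (h2 : c = n - 2 ∨ c = n - 1 ∨ c = n) :
    Hedge n b c := by
  rcases h1 with h1|h1|h1 <;> rcases h2 with h2|h2|h2 <;>
  first
  | omega
  | exact LFIN n hn b c (by omega) (by omega) (by omega) (by omega)
  | exact Hsymm n b c (LFIN n hn c b (by omega) (by omega) (by omega) (by omega))

lemma Hcases (n : ℕ) (hn : 6 ≤ n) (a b : ℕ) (ha : 1 ≤ a) (hab : a < b) (hb : b ≤ n)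
    (h : Hedge n a b) :
    (b = a + 1 ∧ a ≤ n - 5) ∨ (a = n - 4 ∧ b = n - 2) ∨ (a = n - 3 ∧ b = n - 2) ∨
    (2 ≤ a ∧ a ≤ n - 2 ∧ b = n - 1) ∨ (1 ≤ a ∧ a ≠ n - 3 ∧ b = n) := by
  rcases h with (h|h|h|h|h)|(h|h|h|h|h) <;> omega

lemma Hpeo (n : ℕ) (hn : 6 ≤ n) : ∀ a b c : ℕ, 1 ≤ a → b ≤ n → c ≤ n → a < b → a < c →
    b ≠ c → Hedge n a b → Hedge n a c → Hedge n b c := by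
  intro a b c h1 h2 h3 h4 h5 h6 hab hac
  have Hb := Hcases n hn a b h1 h4 h2 hab
  have Hc := Hcases n hn a c h1 h5 h3 hac
  rcases Hb with ⟨u1,u2⟩|⟨u1,u2⟩|⟨u1,u2⟩|⟨u1,u2,u3⟩|⟨u1,u2,u3⟩ <;>
  rcases Hc with ⟨v1,v2⟩|⟨v1,v2⟩|⟨v1,v2⟩|⟨v1,v2,v3⟩|⟨v1,v2,v3⟩ <;>
  first
  | omega
  | exact LFIN n hn b c (by omega) (by omega) (by omega) (by omega)
  | exact Hsymm n b c (LFIN n hn c b (by omega) (by omega) (by omega) (by omega))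

lemma CH_peo (n r : ℕ) (hn : 6 ≤ n) : IsPEO (CHedge n r) (Finset.Icc 1 (r + n)) := by
  intro i hi j hj l hl hij hil hjl hEij hEil
  simp only [Finset.mem_Icc] at hi hj hl
  rcases hEij with ⟨hri, hrj, hH⟩ | ⟨h1,h2,h3,h4,h5⟩ | ⟨h1,h2,h3⟩ | ⟨h1,h2,h3⟩
  · rcases hEil with ⟨hri', hrl, hG⟩ | g | g | ⟨g1,g2,g3⟩
    · exact Or.inl ⟨hrj, hrl, Hpeo n hn (i-r) (j-r) (l-r) (by omega) (by omega) (by omega)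
        (by omega) (by omega) (by omega) hH hG⟩
    · omega
    · omega
    · omega
  · rcases hEil with ⟨hri', hrl, hG⟩ | ⟨g1,g2,g3,g4,g5⟩ | ⟨g1,g2,g3⟩ | ⟨g1,g2,g3⟩
    · omega
    · exact Or.inr (Or.inl ⟨by omega, h4, by omega, g4, by omega⟩)
    · exact Or.inr (Or.inr (Or.inl ⟨by omega, h4, g3⟩))
    · omega
  · rcases hEil with ⟨hri', hrl, hG⟩ | ⟨g1,g2,g3,g4,g5⟩ | ⟨g1,g2,g3⟩ | ⟨g1,g2,g3⟩
    · omega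
    · exact Or.inr (Or.inr (Or.inr ⟨by omega, g4, by omega⟩))
    · exact Or.inl ⟨by omega, by omega,
        key2 n hn (j-r) (l-r) (by omega) (by omega) (by omega)⟩
    · omega
  · omega

lemma ACH_peo (n r : ℕ) (hn : 6 ≤ n) : IsPEO (ACHedge n r) (Finset.Icc 1 (r + n)) := by
  intro i hi j hj l hl hij hil hjl hEij hEil
  simp only [Finset.mem_Icc] at hi hj hl
  rcases hEij with (⟨hri, hrj, hH⟩ | ⟨h1,h2,h3,h4,h5⟩ | ⟨h1,h2,h3⟩ | ⟨h1,h2,h3⟩) |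
    ⟨h1,h2,h3⟩ | ⟨h1,h2,h3⟩
  · rcases hEil with (⟨hri', hrl, hG⟩ | g | g | g) | g | g
    · exact Or.inl (Or.inl ⟨hrj, hrl, Hpeo n hn (i-r) (j-r) (l-r) (by omega) (by omega)
        (by omega) (by omega) (by omega) (by omega) hH hG⟩)
    all_goals omega
  · rcases hEil with (⟨hri', hrl, hG⟩ | ⟨g1,g2,g3,g4,g5⟩ | ⟨g1,g2,g3⟩ | ⟨g1,g2,g3⟩) |
      ⟨g1,g2,g3⟩ | ⟨g1,g2,g3⟩
    · omega
    · exact Or.inl (Or.inr (Or.inl ⟨by omega, h4, by omega, g4, by omega⟩))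
    · exact Or.inl (Or.inr (Or.inr (Or.inl ⟨by omega, h4, g3⟩)))
    · omega
    · exact Or.inr (Or.inl ⟨by omega, h4, g3⟩)
    · omega
  · rcases hEil with (⟨hri', hrl, hG⟩ | ⟨g1,g2,g3,g4,g5⟩ | ⟨g1,g2,g3⟩ | ⟨g1,g2,g3⟩) |
      ⟨g1,g2,g3⟩ | ⟨g1,g2,g3⟩
    · omega
    · exact Or.inl (Or.inr (Or.inr (Or.inr ⟨by omega, g4, by omega⟩)))
    · exact Or.inl (Or.inl ⟨by omega, by omega,
        key2 n hn (j-r) (l-r) (by omega) (by omega) (by omega)⟩)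
    · omega
    · exact Or.inl (Or.inl ⟨by omega, by omega,
        key2 n hn (j-r) (l-r) (by omega) (by omega) (by omega)⟩)
    · omega
  · omega
  · rcases hEil with (⟨hri', hrl, hG⟩ | ⟨g1,g2,g3,g4,g5⟩ | ⟨g1,g2,g3⟩ | ⟨g1,g2,g3⟩) |
      ⟨g1,g2,g3⟩ | ⟨g1,g2,g3⟩
    · omega
    · exact Or.inr (Or.inr ⟨by omega, g4, by omega⟩)
    · exact Or.inl (Or.inl ⟨by omega, by omega,
        key2 n hn (j-r) (l-r) (by omega) (by omega) (by omega)⟩)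
    · omega
    · omega
    · omega
  · omega

/-- For `n ≥ 6`, `r ≥ 0`, the ordering `x₁ > ⋯ > x_{r+n}` is a perfect
elimination ordering for both `CH_{n,r}` and `ACH_{n,r}`; in particular both are chordal. -/
theorem CH_ACH_peo (n r : ℕ) (hn : 6 ≤ n) :
    IsPEO (CHedge n r) (Finset.Icc 1 (r + n)) ∧ ChordalOn (CHedge n r) (Finset.Icc 1 (r + n)) ∧
    IsPEO (ACHedge n r) (Finset.Icc 1 (r + n)) ∧ ChordalOn (ACHedge n r) (Finset.Icc 1 (r + n)) := by
  refine ⟨CH_peo n r hn, ⟨id, Set.bijOn_id _, CH_peo n r hn⟩,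
    ACH_peo n r hn, ⟨id, Set.bijOn_id _, ACH_peo n r hn⟩⟩
end

section
/- Let n ≥ 6 and k ≥ 2. A squarefree monomial h = x_{i_1}···x_{i_{k+2}} with i_1 < ··· < i_{k+2} ≤ n is a minimal generator of the k-th homological shift ideal HS_k(I(H_n^c)) if and only if h is of one of the types I–V, i.e., one of the following holds: (I) max(h) ≤ n-4 and [min(h), max(h)] \ supp(h) ≠ ∅; (II) max(h) = n-3; (III) max(h) = n-2 and either (secondmax(h) ∈ {n-3, n-4} and [min(h), secondmax(h)] \ supp(h) ≠ ∅) or secondmax(h) ≤ n-5; (IV) max(h) = n-1, 1 ∈ supp(h), and 2 ∉ supp(h); (V) max(h) = n and secondmax(h) = n-3. -/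
open Finset

lemma hedge_iff {n t l : ℕ} (hn : 6 ≤ n) (ht : 1 ≤ t) (htl : t < l) (hl : l ≤ n) :
    Hedge n t l ↔ (l = t + 1 ∧ t ≤ n - 5) ∨ (t = n - 4 ∧ l = n - 2) ∨
      (t = n - 3 ∧ l = n - 2) ∨ (l = n - 1 ∧ 2 ≤ t) ∨ (l = n ∧ t ≠ n - 3) := by
  unfold Hedge HE; omega

lemma gap_lemma {h : Finset ℕ} {m x : ℕ} (hm : m ∈ h) (hmx : m ≤ x) (hx : x ∉ h) :
    ∃ t ∈ h, m ≤ t ∧ t < x ∧ t + 1 ∉ h := by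
  classical
  set T := h.filter (fun a => a < x) with hT
  have hmT : m ∈ T := by
    refine Finset.mem_filter.mpr ⟨hm, ?_⟩
    exact lt_of_le_of_ne hmx fun e => hx (e ▸ hm)
  have hTne : T.Nonempty := ⟨m, hmT⟩
  have hmax := T.max'_mem hTne
  refine ⟨T.max' hTne, (Finset.mem_filter.mp hmax).1, T.le_max' m hmT,
    (Finset.mem_filter.mp hmax).2, ?_⟩
  intro hmem
  have ht := (Finset.mem_filter.mp hmax).2
  have hne : T.max' hTne + 1 ≠ x := fun e => hx (e ▸ hmem)
  have h1 : T.max' hTne + 1 < x := by omega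
  have := T.le_max' _ (Finset.mem_filter.mpr ⟨hmem, h1⟩)
  omega

/-- For `n ≥ 6`, `k ≥ 2`, a squarefree monomial `h` of degree `k+2`
supported in `[n]` is a minimal generator of `HS_k(I(Hₙᶜ))` iff it is of one of the
types I–V. -/
theorem gens_H (n k : ℕ) (hn : 6 ≤ n) (hk : 2 ≤ k) (h : Finset ℕ)
    (hsub : h ⊆ Finset.Icc 1 n) (hcard : h.card = k + 2) :
    h ∈ hsGens (Hedge n) (Finset.Icc 1 n) k ↔
      ((fmax h ≤ n - 4 ∧ ∃ x, fmin h ≤ x ∧ x ≤ fmax h ∧ x ∉ h) ∨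
       (fmax h = n - 3) ∨
       (fmax h = n - 2 ∧
         (((smax h = n - 3 ∨ smax h = n - 4) ∧ ∃ x, fmin h ≤ x ∧ x ≤ smax h ∧ x ∉ h) ∨
          smax h ≤ n - 5)) ∨
       (fmax h = n - 1 ∧ 1 ∈ h ∧ 2 ∉ h) ∨
       (fmax h = n ∧ smax h = n - 3)) := by
  classical
  have hne : h.Nonempty := Finset.card_pos.mp (by omega)
  have hbd : ∀ a ∈ h, 1 ≤ a ∧ a ≤ n := fun a ha => Finset.mem_Icc.mp (hsub ha)
  have hMmem : fmax h ∈ h := by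
    obtain ⟨b, hb, hb'⟩ := Finset.exists_mem_eq_sup h hne id
    rw [fmax, hb']; exact hb
  have hMle : ∀ a ∈ h, a ≤ fmax h := fun a ha => Finset.le_sup (f := id) ha
  have hmmem : fmin h ∈ h := by
    have := Nat.sInf_mem (s := (↑h : Set ℕ)) (by exact_mod_cast hne)
    exact_mod_cast this
  have hmle : ∀ a ∈ h, fmin h ≤ a := fun a ha => Nat.sInf_le (by exact_mod_cast ha)
  have herase : (h.erase (fmax h)).Nonempty := by
    rw [← Finset.card_pos, Finset.card_erase_of_mem hMmem]; omega
  have hSmem' : smax h ∈ h.erase (fmax h) := by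
    obtain ⟨b, hb, hb'⟩ := Finset.exists_mem_eq_sup _ herase id
    rw [smax, hb']; exact hb
  have hSmem : smax h ∈ h := Finset.mem_of_mem_erase hSmem'
  have hSM : smax h < fmax h :=
    lt_of_le_of_ne (hMle _ hSmem) (Finset.ne_of_mem_erase hSmem')
  have hSle : ∀ a ∈ h, a ≠ fmax h → a ≤ smax h := fun a ha h' =>
    Finset.le_sup (f := id) (Finset.mem_erase.mpr ⟨h', ha⟩)
  have hMn : fmax h ≤ n := (hbd _ hMmem).2
  have hM1 : 1 ≤ fmax h := (hbd _ hMmem).1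
  have key : (∃ t ∈ h, (∃ l ∈ h, t < l) ∧ ∀ l ∈ h, t < l → ¬ Hedge n t l) ↔
      ((fmax h ≤ n - 4 ∧ ∃ x, fmin h ≤ x ∧ x ≤ fmax h ∧ x ∉ h) ∨
       (fmax h = n - 3) ∨
       (fmax h = n - 2 ∧
         (((smax h = n - 3 ∨ smax h = n - 4) ∧ ∃ x, fmin h ≤ x ∧ x ≤ smax h ∧ x ∉ h) ∨
          smax h ≤ n - 5)) ∨
       (fmax h = n - 1 ∧ 1 ∈ h ∧ 2 ∉ h) ∨
       (fmax h = n ∧ smax h = n - 3)) := by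
    constructor
    · rintro ⟨t, ht, ⟨l0, hl0, htl0⟩, hbl⟩
      have htM : t < fmax h := lt_of_lt_of_le htl0 (hMle _ hl0)
      have ht1 : 1 ≤ t := (hbd _ ht).1
      have hcase : fmax h ≤ n - 4 ∨ fmax h = n - 3 ∨ fmax h = n - 2 ∨
          fmax h = n - 1 ∨ fmax h = n := by omega
      rcases hcase with hc | hc | hc | hc | hc
      · -- type I
        have h2 : t + 1 ∉ h := by
          intro h2
          exact hbl (t + 1) h2 (lt_add_one t)
            ((hedge_iff hn ht1 (lt_add_one t) (by omega)).mpr (Or.inl ⟨rfl, by omega⟩))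
        exact Or.inl ⟨hc, t + 1, by have := hmle t ht; omega, by omega, h2⟩
      · exact Or.inr (Or.inl hc)
      · -- type III
        have hM := hbl (fmax h) hMmem htM
        rw [hedge_iff hn ht1 htM hMn] at hM
        have ht5 : t ≤ n - 5 := by omega
        have h2 : t + 1 ∉ h := by
          intro h2
          exact hbl (t + 1) h2 (lt_add_one t)
            ((hedge_iff hn ht1 (lt_add_one t) (by omega)).mpr (Or.inl ⟨rfl, by omega⟩))
        have hScase : smax h ≤ n - 5 ∨ smax h = n - 4 ∨ smax h = n - 3 := by omega
        rcases hScase with hS | hS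
        · exact Or.inr (Or.inr (Or.inl ⟨hc, Or.inr hS⟩))
        · refine Or.inr (Or.inr (Or.inl ⟨hc, Or.inl ⟨hS.symm, t + 1,
            by have := hmle t ht; omega, by omega, h2⟩⟩))
      · -- type IV
        have hM := hbl (fmax h) hMmem htM
        rw [hedge_iff hn ht1 htM hMn] at hM
        have ht1' : t = 1 := by omega
        subst ht1'
        have h2 : 2 ∉ h := by
          intro h2
          exact hbl 2 h2 (by omega)
            ((hedge_iff hn le_rfl (by omega) (by omega)).mpr (by omega))
        exact Or.inr (Or.inr (Or.inr (Or.inl ⟨hc, ht, h2⟩)))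
      · -- type V
        have hM := hbl (fmax h) hMmem htM
        rw [hedge_iff hn ht1 htM hMn] at hM
        have ht3 : t = n - 3 := by omega
        subst ht3
        have h2 : n - 2 ∉ h := by
          intro h2
          exact hbl (n - 2) h2 (by omega)
            ((hedge_iff hn (by omega) (by omega) (by omega)).mpr (by omega))
        have h3 : n - 1 ∉ h := by
          intro h3
          exact hbl (n - 1) h3 (by omega)
            ((hedge_iff hn (by omega) (by omega) (by omega)).mpr (by omega))
        have hSub : smax h ≤ n - 3 := by
          have h4 := (hbd _ hSmem).2
          have h5 : smax h ≠ n - 2 := fun e => h2 (e ▸ hSmem)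
          have h6 : smax h ≠ n - 1 := fun e => h3 (e ▸ hSmem)
          omega
        have hSlb : n - 3 ≤ smax h := hSle _ ht (by omega)
        exact Or.inr (Or.inr (Or.inr (Or.inr ⟨hc, by omega⟩)))
    · rintro (⟨hc, x, hx1, hx2, hx3⟩ | hc | ⟨hc, ⟨hS34, x, hx1, hx2, hx3⟩ | hS5⟩ |
        ⟨hc, h1, h2⟩ | ⟨hc, hS⟩)
      · -- type I
        obtain ⟨t, ht, hmt, htx, ht1'⟩ := gap_lemma hmmem hx1 hx3
        refine ⟨t, ht, ⟨fmax h, hMmem, by omega⟩, ?_⟩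
        intro l hl htl
        rw [hedge_iff hn (hbd _ ht).1 htl (hbd _ hl).2]
        intro hcon
        have hlM : l ≤ fmax h := hMle _ hl
        have hne' : l ≠ t + 1 := fun e => ht1' (e ▸ hl)
        omega
      · -- type II
        refine ⟨smax h, hSmem, ⟨fmax h, hMmem, hSM⟩, ?_⟩
        intro l hl hSl
        have hlM : l = fmax h := by
          by_contra e
          exact absurd (hSle l hl e) (not_le.mpr hSl)
        rw [hedge_iff hn (hbd _ hSmem).1 hSl (hbd _ hl).2]
        omega
      · -- type III, gap case
        obtain ⟨t, ht, hmt, htx, ht1'⟩ := gap_lemma hmmem hx1 hx3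
        have ht5 : t ≤ n - 5 := by
          have hxS : x ≠ smax h := fun e => hx3 (e ▸ hSmem)
          omega
        refine ⟨t, ht, ⟨fmax h, hMmem, by omega⟩, ?_⟩
        intro l hl htl
        rw [hedge_iff hn (hbd _ ht).1 htl (hbd _ hl).2]
        intro hcon
        have hlM : l ≤ fmax h := hMle _ hl
        have hne' : l ≠ t + 1 := fun e => ht1' (e ▸ hl)
        omega
      · -- type III, smax ≤ n-5 case
        refine ⟨smax h, hSmem, ⟨fmax h, hMmem, hSM⟩, ?_⟩
        intro l hl hSl
        have hlM : l = fmax h := by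
          by_contra e
          exact absurd (hSle l hl e) (not_le.mpr hSl)
        rw [hedge_iff hn (hbd _ hSmem).1 hSl (hbd _ hl).2]
        omega
      · -- type IV
        refine ⟨1, h1, ⟨fmax h, hMmem, by omega⟩, ?_⟩
        intro l hl h1l
        rw [hedge_iff hn le_rfl h1l (hbd _ hl).2]
        intro hcon
        have hlM : l ≤ fmax h := hMle _ hl
        have hne' : l ≠ 2 := fun e => h2 (e ▸ hl)
        omega
      · -- type V
        refine ⟨smax h, hSmem, ⟨fmax h, hMmem, hSM⟩, ?_⟩
        intro l hl hSl
        have hlM : l = fmax h := by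
          by_contra e
          exact absurd (hSle l hl e) (not_le.mpr hSl)
        rw [hedge_iff hn (hbd _ hSmem).1 hSl (hbd _ hl).2]
        omega
  constructor
  · rintro ⟨-, -, hP⟩
    exact key.mp hP
  · intro H
    exact ⟨hsub, hcard, key.mpr H⟩
end

section
/- Let n ≥ 6 and 2 ≤ k ≤ n-4. Let m = x_1 · (x_3 x_4 ··· x_k) · (x_{n-3} x_{n-2} x_{n-1} x_n x_{n+1}). Then the restriction of HS_k(I(LH_{n,1}^c)) to the generators dividing m is exactly the two-generator ideal (m/(x_n x_{n+1}), m/(x_{n-2} x_{n-1})), and consequently HS_k(I(LH_{n,1}^c)) does not have linear quotients. -/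
open Finset

lemma LH1_edge_np1 (n b : ℕ) (h1 : 1 ≤ b) (h2 : b ≤ n) (h3 : b ≠ n - 3) :
    LHedge n 1 b (n + 1) := by
  unfold LHedge LHE
  exact Or.inr (Or.inr (Or.inl ⟨le_refl _, le_refl _, h1, h2, h3⟩))

lemma LH1_edge_n (n b : ℕ) (h1 : 1 ≤ b) (h2 : b ≤ n) (h3 : b ≠ n - 3) (h4 : b ≠ n) :
    LHedge n 1 b n := by
  unfold LHedge Hedge HE
  exact Or.inl (Or.inr (Or.inr (Or.inr (Or.inr (Or.inr ⟨rfl, h1, h2, h3, h4⟩)))))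

lemma LH1_edge_nm1 (n b : ℕ) (h1 : 2 ≤ b) (h2 : b ≤ n) (h3 : b ≠ n - 1) :
    LHedge n 1 b (n - 1) := by
  unfold LHedge Hedge HE
  exact Or.inl (Or.inr (Or.inr (Or.inr (Or.inr (Or.inl ⟨rfl, h1, h2, h3⟩)))))

lemma LH1_edge_c3 (n : ℕ) : LHedge n 1 (n - 3) (n - 2) := by
  unfold LHedge Hedge HE
  exact Or.inl (Or.inr (Or.inr (Or.inr (Or.inl ⟨rfl, rfl⟩))))

set_option maxHeartbeats 1600000 in
/-- For `n ≥ 6`, `2 ≤ k ≤ n-4`, and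
`m = x₁·(x₃⋯x_k)·(x_{n-3}x_{n-2}x_{n-1}x_n x_{n+1})`, the restriction of
`HS_k(I(LH_{n,1}ᶜ))` to the generators dividing `m` consists of exactly the two
monomials `m/(x_n x_{n+1})` and `m/(x_{n-2} x_{n-1})`; consequently
`HS_k(I(LH_{n,1}ᶜ))` does not have linear quotients. -/
theorem LH1_restriction (n k : ℕ) (hn : 6 ≤ n) (hk1 : 2 ≤ k) (hk2 : k ≤ n - 4)
    (M : Finset ℕ) (hM : M = insert 1 (Finset.Icc 3 k ∪ Finset.Icc (n - 3) (n + 1))) :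
    {h | h ∈ hsGens (LHedge n 1) (Finset.Icc 1 (n + 1)) k ∧ h ⊆ M}
      = {M \ {n, n + 1}, M \ {n - 2, n - 1}} ∧
    ¬ HasLQ (hsGens (LHedge n 1) (Finset.Icc 1 (n + 1)) k) := by
  have memM : ∀ x, x ∈ M ↔ x = 1 ∨ (3 ≤ x ∧ x ≤ k) ∨ (n - 3 ≤ x ∧ x ≤ n + 1) := by
    intro x; simp [hM, Finset.mem_Icc]
  have cardM : M.card = k + 4 := by
    rw [hM, Finset.card_insert_of_notMem, Finset.card_union_of_disjoint]
    · simp only [Nat.card_Icc]; omega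
    · rw [Finset.disjoint_left]; intro a ha hb
      rw [Finset.mem_Icc] at ha hb; omega
    · simp only [Finset.mem_union, Finset.mem_Icc]; omega
  have cardPair : ∀ a b : ℕ, a ≠ b → ({a, b} : Finset ℕ).card = 2 := by
    intro a b hab
    rw [Finset.card_insert_of_notMem (by simp [hab]), Finset.card_singleton]
  have cardA : (M \ {n, n + 1}).card = k + 2 := by
    rw [Finset.card_sdiff_of_subset]
    · rw [cardPair n (n+1) (by omega), cardM]; omega
    · intro x hx
      simp only [Finset.mem_insert, Finset.mem_singleton] at hx
      rw [memM]; omega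
  have cardB : (M \ {n - 2, n - 1}).card = k + 2 := by
    rw [Finset.card_sdiff_of_subset]
    · rw [cardPair (n-2) (n-1) (by omega), cardM]; omega
    · intro x hx
      simp only [Finset.mem_insert, Finset.mem_singleton] at hx
      rw [memM]; omega
  have key : {h | h ∈ hsGens (LHedge n 1) (Finset.Icc 1 (n + 1)) k ∧ h ⊆ M}
      = {M \ {n, n + 1}, M \ {n - 2, n - 1}} := by
    ext h
    simp only [Set.mem_setOf_eq, Set.mem_insert_iff, Set.mem_singleton_iff]
    constructor
    · rintro ⟨hin, hsub⟩
      obtain ⟨hV, hcard, t, htmem, ⟨l0, hl0mem, hl0⟩, hnon⟩ := hin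
      have htM := (memM t).1 (hsub htmem)
      have hl0M := (memM l0).1 (hsub hl0mem)
      have hcases : t = 1 ∨ (3 ≤ t ∧ t ≤ k) ∨ t = n-3 ∨ t = n-2 ∨ t = n-1 ∨ t = n ∨ t = n+1 := by
        omega
      rcases hcases with ht | ht | ht | ht | ht | ht | ht
      · left
        have hsubA : h ⊆ M \ {n, n + 1} := by
          intro x hx
          rw [Finset.mem_sdiff]
          refine ⟨hsub hx, fun hxin => ?_⟩
          simp only [Finset.mem_insert, Finset.mem_singleton] at hxin
          rcases hxin with h' | h'
          · exact hnon _ hx (by omega)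
              (by rw [ht, h']; exact LH1_edge_n n 1 (by omega) (by omega) (by omega) (by omega))
          · exact hnon _ hx (by omega)
              (by rw [ht, h']; exact LH1_edge_np1 n 1 (by omega) (by omega) (by omega))
        exact Finset.eq_of_subset_of_card_le hsubA (by omega)
      · exfalso
        have hsubC : h ⊆ M \ {n - 1, n, n + 1} := by
          intro x hx
          rw [Finset.mem_sdiff]
          refine ⟨hsub hx, fun hxin => ?_⟩
          simp only [Finset.mem_insert, Finset.mem_singleton] at hxin
          rcases hxin with h' | h' | h'
          · exact hnon _ hx (by omega) (by rw [h']; exact LH1_edge_nm1 n t (by omega) (by omega) (by omega))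
          · exact hnon _ hx (by omega) (by rw [h']; exact LH1_edge_n n t (by omega) (by omega) (by omega) (by omega))
          · exact hnon _ hx (by omega) (by rw [h']; exact LH1_edge_np1 n t (by omega) (by omega) (by omega))
        have hnm1 : (n - 1) ∉ ({n, n + 1} : Finset ℕ) := by
          simp only [Finset.mem_insert, Finset.mem_singleton]; omega
        have hC : (M \ {n - 1, n, n + 1}).card = k + 1 := by
          rw [Finset.card_sdiff_of_subset]
          · rw [Finset.card_insert_of_notMem hnm1, cardPair n (n+1) (by omega), cardM]; omega
          · intro x hx
            simp only [Finset.mem_insert, Finset.mem_singleton] at hx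
            rw [memM]; omega
        have := Finset.card_le_card hsubC
        omega
      · right
        have hsubB : h ⊆ M \ {n - 2, n - 1} := by
          intro x hx
          rw [Finset.mem_sdiff]
          refine ⟨hsub hx, fun hxin => ?_⟩
          simp only [Finset.mem_insert, Finset.mem_singleton] at hxin
          rcases hxin with h' | h'
          · exact hnon _ hx (by omega) (by rw [ht, h']; exact LH1_edge_c3 n)
          · exact hnon _ hx (by omega)
              (by rw [ht, h']; exact LH1_edge_nm1 n (n-3) (by omega) (by omega) (by omega))
        exact Finset.eq_of_subset_of_card_le hsubB (by omega)
      · exfalso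
        have hl0c : l0 = n - 1 ∨ l0 = n ∨ l0 = n + 1 := by omega
        rcases hl0c with h' | h' | h'
        · exact hnon _ hl0mem hl0
            (by rw [ht, h']; exact LH1_edge_nm1 n (n-2) (by omega) (by omega) (by omega))
        · exact hnon _ hl0mem hl0
            (by rw [ht, h']; exact LH1_edge_n n (n-2) (by omega) (by omega) (by omega) (by omega))
        · exact hnon _ hl0mem hl0
            (by rw [ht, h']; exact LH1_edge_np1 n (n-2) (by omega) (by omega) (by omega))
      · exfalso
        have hl0c : l0 = n ∨ l0 = n + 1 := by omega
        rcases hl0c with h' | h'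
        · exact hnon _ hl0mem hl0
            (by rw [ht, h']; exact LH1_edge_n n (n-1) (by omega) (by omega) (by omega) (by omega))
        · exact hnon _ hl0mem hl0
            (by rw [ht, h']; exact LH1_edge_np1 n (n-1) (by omega) (by omega) (by omega))
      · exfalso
        have hl0c : l0 = n + 1 := by omega
        exact hnon _ hl0mem hl0
          (by rw [ht, hl0c]; exact LH1_edge_np1 n n (by omega) (by omega) (by omega))
      · exact absurd hl0 (by omega)
    · have hMsubV : M ⊆ Finset.Icc 1 (n + 1) := by
        intro x hx
        rw [memM] at hx
        rw [Finset.mem_Icc]; omega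
      rintro (rfl | rfl)
      · refine ⟨⟨fun x hx => hMsubV (Finset.mem_sdiff.mp hx).1, cardA, 1, ?_,
          ⟨n - 3, ?_, by omega⟩, ?_⟩, Finset.sdiff_subset⟩
        · rw [Finset.mem_sdiff]
          refine ⟨(memM 1).2 (by omega), ?_⟩
          simp only [Finset.mem_insert, Finset.mem_singleton]; omega
        · rw [Finset.mem_sdiff]
          refine ⟨(memM (n-3)).2 (by omega), ?_⟩
          simp only [Finset.mem_insert, Finset.mem_singleton]; omega
        · intro l hl hl1
          rw [Finset.mem_sdiff] at hl
          have hlM := (memM l).1 hl.1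
          have hlns := hl.2
          simp only [Finset.mem_insert, Finset.mem_singleton] at hlns
          unfold LHedge Hedge HE LHE
          simp only [not_or]
          and_intros <;> omega
      · refine ⟨⟨fun x hx => hMsubV (Finset.mem_sdiff.mp hx).1, cardB, n - 3, ?_,
          ⟨n, ?_, by omega⟩, ?_⟩, Finset.sdiff_subset⟩
        · rw [Finset.mem_sdiff]
          refine ⟨(memM (n-3)).2 (by omega), ?_⟩
          simp only [Finset.mem_insert, Finset.mem_singleton]; omega
        · rw [Finset.mem_sdiff]
          refine ⟨(memM n).2 (by omega), ?_⟩
          simp only [Finset.mem_insert, Finset.mem_singleton]; omega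
        · intro l hl hl1
          rw [Finset.mem_sdiff] at hl
          have hlM := (memM l).1 hl.1
          have hlns := hl.2
          simp only [Finset.mem_insert, Finset.mem_singleton] at hlns
          unfold LHedge Hedge HE LHE
          simp only [not_or]
          and_intros <;> omega
  refine ⟨key, ?_⟩
  rintro ⟨L, hnd, hmemL, hLQ⟩
  have hA2 : M \ {n, n + 1} ∈ {h | h ∈ hsGens (LHedge n 1) (Finset.Icc 1 (n + 1)) k ∧ h ⊆ M} := by
    rw [key]; left; rfl
  have hB2 : M \ {n - 2, n - 1} ∈ {h | h ∈ hsGens (LHedge n 1) (Finset.Icc 1 (n + 1)) k ∧ h ⊆ M} := by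
    rw [key]; right; rfl
  obtain ⟨hAS, -⟩ := hA2
  obtain ⟨hBS, -⟩ := hB2
  have hchar : ∀ P : Finset ℕ, P ∈ hsGens (LHedge n 1) (Finset.Icc 1 (n + 1)) k → P ⊆ M →
      P = M \ {n, n + 1} ∨ P = M \ {n - 2, n - 1} := by
    intro P h1 h2
    have : P ∈ {h | h ∈ hsGens (LHedge n 1) (Finset.Icc 1 (n + 1)) k ∧ h ⊆ M} := ⟨h1, h2⟩
    rw [key] at this
    exact this
  have hdAB : (M \ {n, n + 1}) \ (M \ {n - 2, n - 1}) = {n - 2, n - 1} := by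
    ext x
    simp only [Finset.mem_sdiff, Finset.mem_insert, Finset.mem_singleton, memM, not_and, not_or]
    omega
  have hdBA : (M \ {n - 2, n - 1}) \ (M \ {n, n + 1}) = {n, n + 1} := by
    ext x
    simp only [Finset.mem_sdiff, Finset.mem_insert, Finset.mem_singleton, memM, not_and, not_or]
    omega
  have hAB : M \ {n, n + 1} ≠ M \ {n - 2, n - 1} := by
    intro hEq
    have h1 : n ∈ M \ {n - 2, n - 1} := by
      rw [Finset.mem_sdiff]
      refine ⟨(memM n).2 (by omega), ?_⟩
      simp only [Finset.mem_insert, Finset.mem_singleton]; omega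
    rw [← hEq, Finset.mem_sdiff] at h1
    exact h1.2 (Finset.mem_insert_self _ _)
  obtain ⟨i, hi⟩ := List.mem_iff_get.mp ((hmemL _).mpr hAS)
  obtain ⟨j, hj⟩ := List.mem_iff_get.mp ((hmemL _).mpr hBS)
  have hgetS : ∀ p : Fin L.length, L.get p ∈ hsGens (LHedge n 1) (Finset.Icc 1 (n + 1)) k :=
    fun p => (hmemL _).mp (List.mem_iff_get.mpr ⟨p, rfl⟩)
  rcases lt_trichotomy i j with hij | hij | hij
  · obtain ⟨p, hpj, v, hpv, hv⟩ := hLQ i j hij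
    rw [hi, hj, hdAB] at hv
    rw [hj] at hpv
    simp only [Finset.mem_insert, Finset.mem_singleton] at hv
    have hPM : L.get p ⊆ M := by
      intro x hx
      by_cases hxB : x ∈ M \ {n - 2, n - 1}
      · exact (Finset.mem_sdiff.mp hxB).1
      · have hx2 : x ∈ L.get p \ (M \ {n - 2, n - 1}) := Finset.mem_sdiff.mpr ⟨hx, hxB⟩
        rw [hpv, Finset.mem_singleton] at hx2
        subst hx2
        exact (memM _).2 (by omega)
    rcases hchar _ (hgetS p) hPM with hP | hP
    · rw [hP, hdAB] at hpv
      have e1 : n - 2 ∈ ({v} : Finset ℕ) := by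
        rw [← hpv]; exact Finset.mem_insert_self _ _
      have e2 : n - 1 ∈ ({v} : Finset ℕ) := by
        rw [← hpv]; exact Finset.mem_insert_of_mem (Finset.mem_singleton_self _)
      rw [Finset.mem_singleton] at e1 e2
      omega
    · rw [hP, Finset.sdiff_self] at hpv
      exact Finset.singleton_ne_empty v hpv.symm
  · rw [hij] at hi
    exact hAB (hi.symm.trans hj)
  · obtain ⟨p, hpj, v, hpv, hv⟩ := hLQ j i hij
    rw [hi, hj, hdBA] at hv
    rw [hi] at hpv
    simp only [Finset.mem_insert, Finset.mem_singleton] at hv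
    have hPM : L.get p ⊆ M := by
      intro x hx
      by_cases hxB : x ∈ M \ {n, n + 1}
      · exact (Finset.mem_sdiff.mp hxB).1
      · have hx2 : x ∈ L.get p \ (M \ {n, n + 1}) := Finset.mem_sdiff.mpr ⟨hx, hxB⟩
        rw [hpv, Finset.mem_singleton] at hx2
        subst hx2
        exact (memM _).2 (by omega)
    rcases hchar _ (hgetS p) hPM with hP | hP
    · rw [hP, Finset.sdiff_self] at hpv
      exact Finset.singleton_ne_empty v hpv.symm
    · rw [hP, hdBA] at hpv
      have e1 : n ∈ ({v} : Finset ℕ) := by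
        rw [← hpv]; exact Finset.mem_insert_self _ _
      have e2 : n + 1 ∈ ({v} : Finset ℕ) := by
        rw [← hpv]; exact Finset.mem_insert_of_mem (Finset.mem_singleton_self _)
      rw [Finset.mem_singleton] at e1 e2
      omega
end

section
/- Let n ≥ 6, r ≥ 1, and 2 ≤ k ≤ n-4. Then HS_k(I(LH_{n,r}^c)) does not have linear quotients. -/
open Finset

/-!
The generators `u = x₁x₃⋯x_k x_{n-3}x_{n-2}x_{n-1}` and `w = x₁x₃⋯x_k x_{n-3}x_nx_{n+1}` of
`HS_k` share the `k` vertices `1, 3, …, k, n-3`. Whichever of them comes later in a linear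
quotient order, say `w`, needs an earlier generator `f` with `f \ w = {v}` for some `v ∈ u \ w`,
so `f ⊆ w ∪ {v}` misses at most one vertex of `w ∪ {v}`. A generator must contain a vertex with
no larger neighbour in it, but in such an `f` every non-maximal vertex has one: vertices below `n`
other than `n-3` see `n` and `n+1`, `n-3` sees `n-2` and `n-1`, and `n` sees `n+1`. The same
holds with `u` and `w` exchanged.
-/

theorem Finset.mem_or_eq_of_sdiff_eq_singleton {α : Type*} [DecidableEq α] {s t : Finset α}
    {a x : α} (h : s \ t = {a}) (hx : x ∈ s) : x ∈ t ∨ x = a := by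
  by_cases hxt : x ∈ t
  · exact .inl hxt
  · exact .inr (mem_singleton.1 (h ▸ mem_sdiff.2 ⟨hx, hxt⟩))

theorem HasLQ.exists_sdiff_eq_singleton {S : Set (Finset ℕ)} (h : HasLQ S) {u w : Finset ℕ}
    (hu : u ∈ S) (hw : w ∈ S) (huw : u ≠ w) :
    (∃ f ∈ S, ∃ v ∈ u \ w, f \ w = {v}) ∨ (∃ f ∈ S, ∃ v ∈ w \ u, f \ u = {v}) := by
  obtain ⟨L, -, hL, hLQ⟩ := h
  have later {i j : Fin L.length} (hij : i < j) :
      ∃ f ∈ S, ∃ v ∈ L.get i \ L.get j, f \ L.get j = {v} := by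
    obtain ⟨p, -, v, hpv, hv⟩ := hLQ i j hij
    exact ⟨L.get p, (hL _).1 (L.get_mem p), v, hv, hpv⟩
  obtain ⟨i, rfl⟩ := List.mem_iff_get.1 ((hL u).2 hu)
  obtain ⟨j, rfl⟩ := List.mem_iff_get.1 ((hL w).2 hw)
  rcases lt_trichotomy i j with hij | rfl | hji
  · exact .inl (later hij)
  · exact absurd rfl huw
  · exact .inr (later hji)

theorem Finset.mem_or_mem_of_card_lt {α : Type*} [DecidableEq α] {f C : Finset α} {a b v : α}
    (hf : ∀ x ∈ f, x = a ∨ x = b ∨ x ∈ C ∨ x = v) (hcard : C.card + 1 < f.card) :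
    a ∈ f ∨ b ∈ f := by
  by_contra! hab
  have hsub : f ⊆ insert v C := fun x hx => by
    rcases hf x hx with rfl | rfl | hC | rfl
    · exact absurd hx hab.1
    · exact absurd hx hab.2
    · exact mem_insert_of_mem hC
    · exact mem_insert_self x C
  have := (card_le_card hsub).trans (card_insert_le v C)
  omega

namespace LH

variable {n r k : ℕ}

theorem adj_n {a : ℕ} (ha : 1 ≤ a) (han : a < n) (ha3 : a ≠ n - 3) : LHedge n r a n := by
  unfold LHedge Hedge HE; omega

theorem adj_succ_n (hr : 1 ≤ r) {a : ℕ} (ha : 1 ≤ a) (han : a ≤ n) (ha3 : a ≠ n - 3) :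
    LHedge n r a (n + 1) := by
  unfold LHedge LHE; omega

theorem adj_sub_three_sub_two : LHedge n r (n - 3) (n - 2) := by
  unfold LHedge Hedge HE; omega

theorem adj_sub_three_sub_one (hn : 5 ≤ n) : LHedge n r (n - 3) (n - 1) := by
  unfold LHedge Hedge HE; omega

theorem not_adj_one (hn : 6 ≤ n) {l : ℕ} (hl : 3 ≤ l) (hln : l < n) : ¬ LHedge n r 1 l := by
  unfold LHedge Hedge HE LHE; omega

theorem not_adj_sub_three (hn : 3 ≤ n) {l : ℕ} (hl : n ≤ l) : ¬ LHedge n r (n - 3) l := by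
  unfold LHedge Hedge HE LHE; omega

def core (n k : ℕ) : Finset ℕ := insert 1 (insert (n - 3) (Icc 3 k))

def lowGen (n k : ℕ) : Finset ℕ := insert (n - 2) (insert (n - 1) (core n k))

def highGen (n k : ℕ) : Finset ℕ := insert n (insert (n + 1) (core n k))

theorem mem_core {a : ℕ} : a ∈ core n k ↔ a = 1 ∨ a = n - 3 ∨ 3 ≤ a ∧ a ≤ k := by
  simp [core]

theorem mem_lowGen {a : ℕ} : a ∈ lowGen n k ↔ a = n - 2 ∨ a = n - 1 ∨ a ∈ core n k := by
  simp [lowGen]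

theorem mem_highGen {a : ℕ} : a ∈ highGen n k ↔ a = n ∨ a = n + 1 ∨ a ∈ core n k := by
  simp [highGen]

theorem card_core (hk : 2 ≤ k) (hkn : k ≤ n - 4) : (core n k).card = k := by
  rw [core, card_insert_of_notMem, card_insert_of_notMem, Nat.card_Icc]
  · omega
  · simp only [mem_Icc]; omega
  · simp only [mem_insert, mem_Icc]; omega

theorem card_lowGen (hk : 2 ≤ k) (hkn : k ≤ n - 4) : (lowGen n k).card = k + 2 := by
  rw [lowGen, card_insert_of_notMem, card_insert_of_notMem, card_core hk hkn] <;>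
    simp only [mem_insert, mem_core] <;> omega

theorem card_highGen (hk : 2 ≤ k) (hkn : k ≤ n - 4) : (highGen n k).card = k + 2 := by
  rw [highGen, card_insert_of_notMem, card_insert_of_notMem, card_core hk hkn] <;>
    simp only [mem_insert, mem_core] <;> omega

theorem lowGen_mem_hsGens (hn : 6 ≤ n) (hk : 2 ≤ k) (hkn : k ≤ n - 4) :
    lowGen n k ∈ hsGens (LHedge n r) (Icc 1 (n + r)) k := by
  refine ⟨fun a ha => ?_, card_lowGen hk hkn, 1, ?_, ⟨n - 3, ?_, by omega⟩, fun l hl h1l => ?_⟩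
  · simp only [mem_lowGen, mem_core] at ha; simp only [mem_Icc]; omega
  · simp [mem_lowGen, mem_core]
  · simp [mem_lowGen, mem_core]
  · simp only [mem_lowGen, mem_core] at hl
    exact not_adj_one hn (by omega) (by omega)

theorem highGen_mem_hsGens (hn : 6 ≤ n) (hr : 1 ≤ r) (hk : 2 ≤ k) (hkn : k ≤ n - 4) :
    highGen n k ∈ hsGens (LHedge n r) (Icc 1 (n + r)) k := by
  refine ⟨fun a ha => ?_, card_highGen hk hkn, n - 3, ?_, ⟨n, ?_, by omega⟩, fun l hl h3l => ?_⟩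
  · simp only [mem_highGen, mem_core] at ha; simp only [mem_Icc]; omega
  · simp [mem_highGen, mem_core]
  · simp [mem_highGen]
  · simp only [mem_highGen, mem_core] at hl
    exact not_adj_sub_three (by omega) (by omega)

theorem lowGen_ne_highGen (hn : 1 ≤ n) (hkn : k ≤ n) : lowGen n k ≠ highGen n k := fun h => by
  have h1 := mem_lowGen.1 (h ▸ mem_highGen.2 (.inr (.inl rfl)) : n + 1 ∈ lowGen n k)
  rw [mem_core] at h1
  omega

theorem sdiff_highGen_ne_singleton (hn : 6 ≤ n) (hr : 1 ≤ r) (hk : 2 ≤ k) (hkn : k ≤ n - 4)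
    {f : Finset ℕ} (hf : f ∈ hsGens (LHedge n r) (Icc 1 (n + r)) k) {v : ℕ}
    (hv : v ∈ lowGen n k \ highGen n k) : f \ highGen n k ≠ {v} := by
  intro hfv
  obtain ⟨-, hcard, t, ht, ⟨l, hl, htl⟩, hfree⟩ := hf
  have hv' : v = n - 2 ∨ v = n - 1 := by
    simp only [mem_sdiff, mem_lowGen, mem_highGen, mem_core] at hv; omega
  have hvf : v ∈ f := (mem_sdiff.1 (hfv ▸ mem_singleton_self v)).1
  have hmem (a : ℕ) (ha : a ∈ f) : a = n ∨ a = n + 1 ∨ a ∈ core n k ∨ a = v := by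
    simpa only [mem_highGen, or_assoc] using mem_or_eq_of_sdiff_eq_singleton hfv ha
  have hpair : n ∈ f ∨ n + 1 ∈ f :=
    mem_or_mem_of_card_lt hmem (by rw [card_core hk hkn, hcard]; omega)
  suffices ∃ m ∈ f, t < m ∧ LHedge n r t m by
    obtain ⟨m, hm, htm, hadj⟩ := this
    exact hfree m hm htm hadj
  have hl' := hmem l hl
  rw [mem_core] at hl'
  rcases hmem t ht with htn | htn | htC | rfl
  · subst t
    obtain rfl : l = n + 1 := by omega
    exact ⟨n + 1, hl, htl, adj_succ_n hr (by omega) le_rfl (by omega)⟩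
  · omega
  · rw [mem_core] at htC
    by_cases ht3 : t = n - 3
    · subst ht3
      rcases hv' with rfl | rfl
      · exact ⟨n - 2, hvf, by omega, adj_sub_three_sub_two⟩
      · exact ⟨n - 1, hvf, by omega, adj_sub_three_sub_one (by omega)⟩
    · rcases hpair with h | h
      · exact ⟨n, h, by omega, adj_n (by omega) (by omega) ht3⟩
      · exact ⟨n + 1, h, by omega, adj_succ_n hr (by omega) (by omega) ht3⟩
  · refine ⟨l, hl, htl, ?_⟩
    obtain hln | hln : l = n ∨ l = n + 1 := by omega
    · exact hln ▸ adj_n (by omega) (by omega) (by omega)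
    · exact hln ▸ adj_succ_n hr (by omega) (by omega) (by omega)

theorem sdiff_lowGen_ne_singleton (hn : 6 ≤ n) (hr : 1 ≤ r) (hk : 2 ≤ k) (hkn : k ≤ n - 4)
    {f : Finset ℕ} (hf : f ∈ hsGens (LHedge n r) (Icc 1 (n + r)) k) {v : ℕ}
    (hv : v ∈ highGen n k \ lowGen n k) : f \ lowGen n k ≠ {v} := by
  intro hfv
  obtain ⟨-, hcard, t, ht, ⟨l, hl, htl⟩, hfree⟩ := hf
  have hv' : v = n ∨ v = n + 1 := by
    simp only [mem_sdiff, mem_lowGen, mem_highGen, mem_core] at hv; omega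
  have hvf : v ∈ f := (mem_sdiff.1 (hfv ▸ mem_singleton_self v)).1
  have hmem (a : ℕ) (ha : a ∈ f) : a = n - 2 ∨ a = n - 1 ∨ a ∈ core n k ∨ a = v := by
    simpa only [mem_lowGen, or_assoc] using mem_or_eq_of_sdiff_eq_singleton hfv ha
  have hpair : n - 2 ∈ f ∨ n - 1 ∈ f :=
    mem_or_mem_of_card_lt hmem (by rw [card_core hk hkn, hcard]; omega)
  have adj_v {a : ℕ} (ha : 1 ≤ a) (han : a < n) (ha3 : a ≠ n - 3) : LHedge n r a v := by
    rcases hv' with rfl | rfl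
    exacts [adj_n ha han ha3, adj_succ_n hr ha han.le ha3]
  suffices ∃ m ∈ f, t < m ∧ LHedge n r t m by
    obtain ⟨m, hm, htm, hadj⟩ := this
    exact hfree m hm htm hadj
  rcases hmem t ht with rfl | rfl | htC | rfl
  · exact ⟨v, hvf, by omega, adj_v (by omega) (by omega) (by omega)⟩
  · exact ⟨v, hvf, by omega, adj_v (by omega) (by omega) (by omega)⟩
  · rw [mem_core] at htC
    by_cases ht3 : t = n - 3
    · subst ht3
      rcases hpair with h | h
      · exact ⟨n - 2, h, by omega, adj_sub_three_sub_two⟩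
      · exact ⟨n - 1, h, by omega, adj_sub_three_sub_one (by omega)⟩
    · exact ⟨v, hvf, by omega, adj_v (by omega) (by omega) ht3⟩
  · have hl' := hmem l hl
    rw [mem_core] at hl'
    omega

end LH

/-- For `n ≥ 6`, `r ≥ 1` and `2 ≤ k ≤ n-4`, the ideal
`HS_k(I(LH_{n,r}ᶜ))` does not have linear quotients. -/
theorem LH_no_LQ (n r k : ℕ) (hn : 6 ≤ n) (hr : 1 ≤ r) (hk1 : 2 ≤ k) (hk2 : k ≤ n - 4) :
    ¬ HasLQ (hsGens (LHedge n r) (Finset.Icc 1 (n + r)) k) := by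
  intro hLQ
  rcases hLQ.exists_sdiff_eq_singleton (LH.lowGen_mem_hsGens hn hk1 hk2)
      (LH.highGen_mem_hsGens hn hr hk1 hk2) (LH.lowGen_ne_highGen (by omega) (by omega))
    with ⟨f, hf, v, hv, hfv⟩ | ⟨f, hf, v, hv, hfv⟩
  · exact LH.sdiff_highGen_ne_singleton hn hr hk1 hk2 hf hv hfv
  · exact LH.sdiff_lowGen_ne_singleton hn hr hk1 hk2 hf hv hfv
end

section
/- For any n ≥ 6 and r ≥ 0, HS_k(I(CH_{n,r}^c)) ≠ 0 if and only if k ≤ r + n - 4, and likewise HS_k(I(ACH_{n,r}^c)) ≠ 0 if and only if k ≤ r + n - 4. -/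
open Finset

/-!
A generator of `HS_k` is a `(k+2)`-set `h` containing a vertex `t` with a larger element of `h`
but no larger neighbour in `h`. In `CH_{n,r}` every vertex other than `x_{r+n-1}`, `x_{r+n}` has
two larger neighbours, and `x_{r+n-1}` is adjacent to the only larger vertex, so `h` misses two
vertices: `k + 4 ≤ r + n`. Conversely `x_{r+1}` has only `x_{r+2}` and `x_{r+n}` as larger
neighbours, even in `ACH_{n,r}`, so all vertices but these two form a generator of
`HS_{r+n-4}`, and its subsets through `x_{r+1}, x_{r+3}` give generators of every smaller `HS_k`.
Since `CH_{n,r} ⊆ ACH_{n,r}`, both bounds transfer to the other graph.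
-/

lemma hsGens_anti {E E' : ℕ → ℕ → Prop} (hEE' : ∀ a b, E a b → E' a b) (V : Finset ℕ) (k : ℕ) :
    hsGens E' V k ⊆ hsGens E V k :=
  fun _ ⟨hV, hcard, t, ht, hl, hfree⟩ =>
    ⟨hV, hcard, t, ht, hl, fun l hl htl hE => hfree l hl htl (hEE' t l hE)⟩

lemma card_add_four_le_of_hsGens_nonempty {E : ℕ → ℕ → Prop} {V : Finset ℕ} {k : ℕ}
    (hV : ∀ t ∈ V, (∃ u ∈ V, ∃ v ∈ V, u ≠ v ∧ t < u ∧ t < v ∧ E t u ∧ E t v) ∨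
      ∀ l ∈ V, t < l → E t l)
    (hk : (hsGens E V k).Nonempty) : k + 4 ≤ #V := by
  obtain ⟨h, hhV, hcard, t, ht, ⟨l, hl, htl⟩, hfree⟩ := hk
  rcases hV t (hhV ht) with ⟨u, hu, v, hv, huv, htu, htv, hEu, hEv⟩ | hall
  · have hsub : h ⊆ (V.erase u).erase v := fun x hx =>
      mem_erase.2 ⟨fun hxv => hfree v (hxv ▸ hx) htv hEv,
        mem_erase.2 ⟨fun hxu => hfree u (hxu ▸ hx) htu hEu, hhV hx⟩⟩
    have := card_le_card hsub
    rw [card_erase_of_mem (mem_erase.2 ⟨huv.symm, hv⟩), card_erase_of_mem hu] at this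
    omega
  · exact absurd (hall l (hhV hl) htl) (hfree l hl htl)

lemma hsGens_nonempty_of_subset {E : ℕ → ℕ → Prop} {V s : Finset ℕ} {t l k : ℕ}
    (hsV : s ⊆ V) (ht : t ∈ s) (hl : l ∈ s) (htl : t < l) (hfree : ∀ x ∈ s, t < x → ¬ E t x)
    (hk : k + 2 ≤ #s) : (hsGens E V k).Nonempty := by
  obtain ⟨h, hth, hhs, hcard⟩ :=
    exists_subsuperset_card_eq (insert_subset ht (singleton_subset_iff.2 hl))
      (by rw [card_pair htl.ne]; omega) hk
  exact ⟨h, hhs.trans hsV, hcard, t, hth (by simp), ⟨l, hth (by simp), htl⟩,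
    fun x hx => hfree x (hhs hx)⟩

lemma Hedge_two_upper {n a : ℕ} (hn : 6 ≤ n) (ha1 : 1 ≤ a) (ha : a ≤ n - 2) :
    ∃ b c, a < b ∧ b < c ∧ c ≤ n ∧ Hedge n a b ∧ Hedge n a c := by
  by_cases h1 : a = 1
  · exact ⟨2, n, by omega, by omega, le_rfl, Or.inl (Or.inl (by omega)),
      Or.inr (Or.inr (Or.inr (Or.inr (Or.inr (by omega)))))⟩
  by_cases h3 : a = n - 3
  · exact ⟨n - 2, n - 1, by omega, by omega, by omega,
      Or.inr (Or.inr (Or.inr (Or.inl (by omega)))),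
      Or.inr (Or.inr (Or.inr (Or.inr (Or.inl (by omega)))))⟩
  · exact ⟨n - 1, n, by omega, by omega, le_rfl,
      Or.inr (Or.inr (Or.inr (Or.inr (Or.inl (by omega))))),
      Or.inr (Or.inr (Or.inr (Or.inr (Or.inr (by omega)))))⟩

lemma CHedge_two_upper_or_all {n r : ℕ} (hn : 6 ≤ n) : ∀ t ∈ Icc 1 (r + n),
    (∃ u ∈ Icc 1 (r + n), ∃ v ∈ Icc 1 (r + n), u ≠ v ∧ t < u ∧ t < v ∧
      CHedge n r t u ∧ CHedge n r t v) ∨ ∀ l ∈ Icc 1 (r + n), t < l → CHedge n r t l := by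
  intro t ht
  rw [mem_Icc] at ht
  by_cases hlast : r + n - 1 ≤ t
  · refine Or.inr fun l hl htl =>
      Or.inl ⟨by omega, by omega, Or.inl (Or.inr (Or.inr (Or.inr (Or.inl ?_))))⟩
    rw [mem_Icc] at hl
    omega
  left
  by_cases hclique : t ≤ r
  · exact ⟨r + n - 1, by simp; omega, r + n, by simp; omega, by omega, by omega, by omega,
      Or.inr (Or.inr (Or.inl ⟨ht.1, hclique, Or.inl rfl⟩)),
      Or.inr (Or.inr (Or.inl ⟨ht.1, hclique, Or.inr rfl⟩))⟩
  obtain ⟨b, c, hab, hbc, hc, hEb, hEc⟩ := Hedge_two_upper (a := t - r) hn (by omega) (by omega)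
  refine ⟨r + b, by simp; omega, r + c, by simp; omega, by omega, by omega, by omega,
    Or.inl ⟨by omega, by omega, ?_⟩, Or.inl ⟨by omega, by omega, ?_⟩⟩
  · rwa [Nat.add_sub_cancel_left]
  · rwa [Nat.add_sub_cancel_left]

lemma not_ACHedge_of_lt {n r l : ℕ} (hn : 6 ≤ n) (h3 : r + 3 ≤ l) (hl : l < r + n) :
    ¬ ACHedge n r (r + 1) l := by
  simp only [ACHedge, CHedge, Hedge, HE]
  omega

/-- For `n ≥ 6`, `r ≥ 0`: `HS_k(I(CH_{n,r}ᶜ)) ≠ 0` iff `k ≤ r+n-4`,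
and likewise `HS_k(I(ACH_{n,r}ᶜ)) ≠ 0` iff `k ≤ r+n-4`. -/
theorem hs_nonzero_CH_ACH (n r : ℕ) (hn : 6 ≤ n) :
    (∀ k, (hsGens (CHedge n r) (Finset.Icc 1 (r + n)) k).Nonempty ↔ k ≤ r + n - 4) ∧
    (∀ k, (hsGens (ACHedge n r) (Finset.Icc 1 (r + n)) k).Nonempty ↔ k ≤ r + n - 4) := by
  have hmono : ∀ k,
      hsGens (ACHedge n r) (Icc 1 (r + n)) k ⊆ hsGens (CHedge n r) (Icc 1 (r + n)) k :=
    hsGens_anti (fun _ _ h => Or.inl h) _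
  have upper : ∀ k, (hsGens (CHedge n r) (Icc 1 (r + n)) k).Nonempty → k ≤ r + n - 4 := by
    intro k hk
    have := card_add_four_le_of_hsGens_nonempty (CHedge_two_upper_or_all hn) hk
    simp only [Nat.card_Icc] at this
    omega
  have lower : ∀ k, k ≤ r + n - 4 → (hsGens (ACHedge n r) (Icc 1 (r + n)) k).Nonempty := by
    intro k hk
    set s := ((Icc 1 (r + n)).erase (r + n)).erase (r + 2)
    have hs : #s = r + n - 2 := by
      rw [card_erase_of_mem (by simp; omega), card_erase_of_mem (by simp; omega), Nat.card_Icc]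
      omega
    refine hsGens_nonempty_of_subset (t := r + 1) (l := r + 3) (s := s)
      ((erase_subset _ _).trans (erase_subset _ _)) (by simp [s]; omega) (by simp [s]; omega)
      (by omega) (fun x hx htx => not_ACHedge_of_lt hn ?_ ?_) (by omega)
    all_goals simp only [s, mem_erase, mem_Icc] at hx; omega
  exact ⟨fun k => ⟨upper k, fun hk => (lower k hk).mono (hmono k)⟩,
    fun k => ⟨fun hk => upper k (hk.mono (hmono k)), lower k⟩⟩
end

section
/- Let n ≥ 6 and k = n - 4 + r for some r ≥ 0. Then HS_k(I(ACH_{n,r}^c)) is minimally generated by exactly the two monomials u/(x_{r+n-2} x_{r+n-1}) and u/(x_{r+2} x_{r+n}), where u = x_1 x_2 ··· x_{r+n}, and consequently HS_k(I(ACH_{n,r}^c)) does not have linear quotients. -/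
open Finset

/-
Since `|V| = k + 4`, every generator of `HS_k` has the form `V \ {a, b}`, and `V \ {a, b}` is
one exactly when some `t ≠ a, b` that is not the largest element of `V \ {a, b}` has all its
later neighbours among `a, b`. In `ACH_{n,r}` every vertex except `x_{r+1}`, `x_{r+n-3}` and
the last three has at least three later neighbours; the later neighbours of `x_{r+1}` are
`x_{r+2}, x_{r+n}`, those of `x_{r+n-3}` are `x_{r+n-2}, x_{r+n-1}`, and each of the last three
vertices is adjacent to every later vertex. The two generators obtained differ by two variables
in each direction, so whichever comes second, its colon ideal is not generated by variables.
-/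

section HomologicalShift

variable {E : ℕ → ℕ → Prop} {V : Finset ℕ} {k : ℕ}

lemma exists_eq_sdiff_pair_of_mem_hsGens {h : Finset ℕ} (hh : h ∈ hsGens E V k)
    (hV : V.card = k + 4) : ∃ a ∈ V, ∃ b ∈ V, a ≠ b ∧ h = V \ {a, b} := by
  obtain ⟨hsub, hcard, -⟩ := hh
  have hcompl : (V \ h).card = 2 := by
    rw [card_sdiff_of_subset hsub, hV, hcard]
    omega
  obtain ⟨a, b, hab, hs⟩ := card_eq_two.mp hcompl
  have hpair : {a, b} ⊆ V := hs ▸ sdiff_subset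
  exact ⟨a, hpair (mem_insert_self a {b}), b, hpair (mem_insert_of_mem (mem_singleton_self b)),
    hab, by rw [← hs, Finset.sdiff_sdiff_eq_self hsub]⟩

lemma sdiff_pair_mem_hsGens_iff {a b : ℕ} (ha : a ∈ V) (hb : b ∈ V) (hab : a ≠ b)
    (hV : V.card = k + 4) :
    V \ {a, b} ∈ hsGens E V k ↔
      ∃ t ∈ V, t ≠ a ∧ t ≠ b ∧ (∃ l ∈ V, t < l ∧ l ≠ a ∧ l ≠ b) ∧
        ∀ l ∈ V, t < l → E t l → l = a ∨ l = b := by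
  have hcard : (V \ {a, b}).card = k + 2 := by
    rw [card_sdiff_of_subset (insert_subset ha (singleton_subset_iff.mpr hb)), hV,
      card_pair hab]
    omega
  simp only [hsGens, Set.mem_ofPred_eq, sdiff_subset, hcard, mem_sdiff, mem_insert,
    mem_singleton, true_and]
  constructor
  · rintro ⟨t, ⟨htV, htab⟩, ⟨l, ⟨hlV, hlab⟩, htl⟩, hup⟩
    refine ⟨t, htV, by tauto, by tauto, ⟨l, hlV, htl, by tauto, by tauto⟩, ?_⟩
    intro x hxV htx hE
    by_contra hx
    exact hup x ⟨hxV, hx⟩ htx hE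
  · rintro ⟨t, htV, hta, htb, ⟨l, hlV, htl, hla, hlb⟩, hup⟩
    refine ⟨t, ⟨htV, by tauto⟩, ⟨l, ⟨hlV, by tauto⟩, htl⟩, ?_⟩
    rintro x ⟨hxV, hx⟩ htx hE
    exact hx (hup x hxV htx hE)

end HomologicalShift

lemma not_hasLQ_pair {g f : Finset ℕ} (hgf : 1 < (g \ f).card) (hfg : 1 < (f \ g).card) :
    ¬ HasLQ {g, f} := by
  rintro ⟨L, hnd, hmem, hLQ⟩
  have hne : g ≠ f := by
    rintro rfl
    simp at hgf
  obtain ⟨i, hi⟩ := List.mem_iff_get.mp ((hmem g).mpr (Or.inl rfl))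
  obtain ⟨j, hj⟩ := List.mem_iff_get.mp ((hmem f).mpr (Or.inr rfl))
  have hij : i ≠ j := fun h => hne (hi ▸ hj ▸ congrArg L.get h)
  obtain ⟨i', j', hlt⟩ : ∃ i' j' : Fin L.length, i' < j' :=
    (lt_or_gt_of_ne hij).elim (fun h => ⟨i, j, h⟩) (fun h => ⟨j, i, h⟩)
  obtain ⟨p, hpj, v, hv, -⟩ := hLQ i' j' hlt
  have hdiff : L.get p ≠ L.get j' := fun h => hpj.ne (hnd.get_inj_iff.mp h)
  have hcard : (L.get p \ L.get j').card = 1 := by rw [hv, card_singleton]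
  rcases (hmem _).mp (L.get_mem p) with hp | hp <;>
    rcases (hmem _).mp (L.get_mem j') with hq | hq <;>
    rw [hp, hq] at hcard hdiff <;> first | exact hdiff rfl | omega

section ACH

variable {n r t : ℕ}

lemma ACHedge_top (ht : 1 ≤ t) (htn : t < r + n) (ht3 : t ≠ r + n - 3) :
    ACHedge n r t (r + n) := by
  rcases le_or_gt t r with htr | htr
  · exact Or.inl (Or.inr (Or.inr (Or.inl ⟨ht, htr, Or.inr rfl⟩)))
  · exact Or.inl (Or.inl ⟨htr, by omega, Or.inr (Or.inr (Or.inr (Or.inr (Or.inr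
      ⟨by omega, by omega, by omega, by omega, by omega⟩))))⟩)

lemma ACHedge_top_pred (ht : 1 ≤ t) (htn : t < r + n - 1) (ht1 : t ≠ r + 1) :
    ACHedge n r t (r + n - 1) := by
  rcases le_or_gt t r with htr | htr
  · exact Or.inl (Or.inr (Or.inr (Or.inl ⟨ht, htr, Or.inl rfl⟩)))
  · exact Or.inl (Or.inl ⟨htr, by omega, Or.inr (Or.inr (Or.inr (Or.inr (Or.inl
      ⟨by omega, by omega, by omega, by omega⟩))))⟩)

lemma exists_ACHedge_below_top_pred (ht : 1 ≤ t) (htn : t ≤ r + n - 4) (ht1 : t ≠ r + 1) :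
    ∃ p, t < p ∧ p < r + n - 1 ∧ ACHedge n r t p := by
  rcases le_or_gt t r with htr | htr
  · exact ⟨r + n - 2, by omega, by omega, Or.inr (Or.inl ⟨ht, htr, rfl⟩)⟩
  rcases eq_or_lt_of_le htn with rfl | htn
  · exact ⟨r + n - 2, by omega, by omega,
      Or.inl (Or.inl ⟨htr, by omega, Or.inl (Or.inr (Or.inl ⟨by omega, by omega⟩))⟩)⟩
  · exact ⟨t + 1, by omega, by omega,
      Or.inl (Or.inl ⟨htr, by omega, Or.inl (Or.inl ⟨by omega, by omega, by omega⟩)⟩)⟩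

lemma ACHedge_first (hn : 6 ≤ n) : ACHedge n r (r + 1) (r + 2) :=
  Or.inl (Or.inl ⟨by omega, by omega, Or.inl (Or.inl ⟨by omega, by omega, by omega⟩)⟩)

lemma ACHedge_r_n_sub_three (hn : 6 ≤ n) : ACHedge n r (r + n - 3) (r + n - 2) :=
  Or.inl (Or.inl ⟨by omega, by omega, Or.inr (Or.inr (Or.inr (Or.inl ⟨by omega, by omega⟩)))⟩)

lemma eq_of_ACHedge_first {l : ℕ} (hn : 6 ≤ n) (hl : r + 1 < l) (hE : ACHedge n r (r + 1) l) :
    l = r + 2 ∨ l = r + n := by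
  simp only [ACHedge, CHedge, Hedge, HE] at hE
  rcases hE with (⟨-, -, (h | h | h | h | h) | (h | h | h | h | h)⟩ | h | h | h) | h | h <;> omega

lemma eq_of_ACHedge_r_n_sub_three {l : ℕ} (hn : 6 ≤ n) (hl : r + n - 3 < l)
    (hE : ACHedge n r (r + n - 3) l) : l = r + n - 2 ∨ l = r + n - 1 := by
  simp only [ACHedge, CHedge, Hedge, HE] at hE
  rcases hE with (⟨-, -, (h | h | h | h | h) | (h | h | h | h | h)⟩ | h | h | h) | h | h <;> omega

lemma ACH_pair_eq_of_later_neighbours_mem {l a b : ℕ} (hn : 6 ≤ n) (ht : 1 ≤ t)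
    (htl : t < l) (hl : l ≤ r + n) (hla : l ≠ a) (hlb : l ≠ b)
    (hup : ∀ x ∈ Icc 1 (r + n), t < x → ACHedge n r t x → x = a ∨ x = b) :
    ({a, b} : Finset ℕ) = {r + n - 2, r + n - 1} ∨ ({a, b} : Finset ℕ) = {r + 2, r + n} := by
  have up : ∀ x, t < x → x ≤ r + n → ACHedge n r t x → x = a ∨ x = b :=
    fun x htx hx hE => hup x (mem_Icc.mpr ⟨by omega, hx⟩) htx hE
  have h_top : t ≠ r + n - 3 → r + n = a ∨ r + n = b := fun h3 =>
    up _ (by omega) le_rfl (ACHedge_top ht (by omega) h3)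
  have h_pred : t < r + n - 1 → t ≠ r + 1 → r + n - 1 = a ∨ r + n - 1 = b := fun h2 h1 =>
    up _ h2 (by omega) (ACHedge_top_pred ht h2 h1)
  suffices (a = r + n - 2 ∧ b = r + n - 1 ∨ a = r + n - 1 ∧ b = r + n - 2) ∨
      (a = r + 2 ∧ b = r + n ∨ a = r + n ∧ b = r + 2) by
    rcases this with (⟨rfl, rfl⟩ | ⟨rfl, rfl⟩) | (⟨rfl, rfl⟩ | ⟨rfl, rfl⟩) <;>
      simp [pair_comm]
  by_cases h1 : t = r + 1
  · subst h1
    have := up _ (by omega) (by omega) (ACHedge_first hn)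
    have := h_top (by omega)
    omega
  by_cases h3 : t = r + n - 3
  · subst h3
    have := up _ (by omega) (by omega) (ACHedge_r_n_sub_three hn)
    have := h_pred (by omega) h1
    omega
  have := h_top h3
  by_cases h4 : t ≤ r + n - 4
  · obtain ⟨p, htp, hp, hE⟩ := exists_ACHedge_below_top_pred ht h4 h1
    have := up p htp (by omega) hE
    have := h_pred (by omega) h1
    omega
  · have := h_pred
    omega

lemma hsGens_ACH (hn : 6 ≤ n) {k : ℕ} (hk : k = n - 4 + r) :
    hsGens (ACHedge n r) (Icc 1 (r + n)) k =
      {Icc 1 (r + n) \ {r + n - 2, r + n - 1}, Icc 1 (r + n) \ {r + 2, r + n}} := by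
  have hV : (Icc 1 (r + n)).card = k + 4 := by simp only [Nat.card_Icc]; omega
  ext h
  constructor
  · intro hh
    obtain ⟨a, ha, b, hb, hab, rfl⟩ := exists_eq_sdiff_pair_of_mem_hsGens hh hV
    obtain ⟨t, ht, -, -, ⟨l, hl, htl, hla, hlb⟩, hup⟩ :=
      (sdiff_pair_mem_hsGens_iff ha hb hab hV).mp hh
    rw [mem_Icc] at ht hl
    rcases ACH_pair_eq_of_later_neighbours_mem hn ht.1 htl hl.2 hla hlb hup with h | h <;>
      simp [h]
  · rintro (rfl | rfl)
    · refine (sdiff_pair_mem_hsGens_iff (mem_Icc.mpr (by omega)) (mem_Icc.mpr (by omega))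
        (by omega) hV).mpr ⟨r + n - 3, mem_Icc.mpr (by omega), by omega, by omega,
          ⟨r + n, mem_Icc.mpr (by omega), by omega, by omega, by omega⟩,
          fun l _ hl hE => eq_of_ACHedge_r_n_sub_three hn hl hE⟩
    · refine (sdiff_pair_mem_hsGens_iff (mem_Icc.mpr (by omega)) (mem_Icc.mpr (by omega))
        (by omega) hV).mpr ⟨r + 1, mem_Icc.mpr (by omega), by omega, by omega,
          ⟨r + 3, mem_Icc.mpr (by omega), by omega, by omega, by omega⟩,
          fun l _ hl hE => eq_of_ACHedge_first hn hl hE⟩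

end ACH

/-- For `n ≥ 6` and `k = n-4+r`, the ideal `HS_k(I(ACH_{n,r}ᶜ))` is
minimally generated by exactly the two monomials `u/(x_{r+n-2} x_{r+n-1})` and
`u/(x_{r+2} x_{r+n})` where `u = x₁⋯x_{r+n}`; consequently it does not have linear
quotients. -/
theorem ACH_two_gens (n r k : ℕ) (hn : 6 ≤ n) (hk : k = n - 4 + r) :
    hsGens (ACHedge n r) (Finset.Icc 1 (r + n)) k
      = {Finset.Icc 1 (r + n) \ {r + n - 2, r + n - 1},
         Finset.Icc 1 (r + n) \ {r + 2, r + n}} ∧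
    ¬ HasLQ (hsGens (ACHedge n r) (Finset.Icc 1 (r + n)) k) := by
  refine ⟨hsGens_ACH hn hk, ?_⟩
  rw [hsGens_ACH hn hk]
  have mem {x p q : ℕ} : x ∈ Icc 1 (r + n) \ {p, q} ↔ (1 ≤ x ∧ x ≤ r + n) ∧ x ≠ p ∧ x ≠ q := by
    simp only [mem_sdiff, mem_Icc, mem_insert, mem_singleton, not_or]
  apply not_hasLQ_pair <;> rw [one_lt_card]
  · exact ⟨r + 2, mem_sdiff.mpr ⟨mem.mpr (by omega), fun h => (mem.mp h).2.1 rfl⟩, r + n,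
      mem_sdiff.mpr ⟨mem.mpr (by omega), fun h => (mem.mp h).2.2 rfl⟩, by omega⟩
  · exact ⟨r + n - 2, mem_sdiff.mpr ⟨mem.mpr (by omega), fun h => (mem.mp h).2.1 rfl⟩,
      r + n - 1, mem_sdiff.mpr ⟨mem.mpr (by omega), fun h => (mem.mp h).2.2 rfl⟩, by omega⟩
end

section
/- Let n ≥ 6 and r ≥ 0, and let n-4 ≤ k ≤ n+r-4. Then HS_k(I(ACH_{n,r}^c)) does not have linear quotients. -/
open Finset

/-! The variables `x_m, …, x_{r+n}` with `m = r+n-k-3` span an induced copy of `ACH_{n,k-n+4}`;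
with `u` their product, the only generators of `HS_k` dividing `u` are
`u/(x_{r+n-2}x_{r+n-1})` and `u/(x_{r+2}x_{r+n})`: such a generator omits two of the variables,
and these must include every later neighbour of its non-adjacency witness, which rules out every
witness except `x_{r+1}` and `x_{r+n-3}`. In any order of the generators, the linear
colon of the later of the two must come from a generator that also divides `u`, hence from the
other one, whose quotient by it has degree two. -/

lemma LQList.card_sdiff_eq_one {L : List (Finset ℕ)} (hL : LQList L) {W : Finset ℕ}
    {i j : Fin L.length} (hij : i < j) (hiW : L.get i ⊆ W) (hjW : L.get j ⊆ W)
    (honly : ∀ p, L.get p ⊆ W → L.get p = L.get i ∨ L.get p = L.get j) :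
    #(L.get i \ L.get j) = 1 := by
  obtain ⟨p, -, v, hpv, hv⟩ := hL i j hij
  have hpW : L.get p ⊆ W := by
    intro x hx
    by_cases hxj : x ∈ L.get j
    · exact hjW hxj
    · have hxv : x ∈ ({v} : Finset ℕ) := hpv ▸ mem_sdiff.2 ⟨hx, hxj⟩
      rw [mem_singleton.1 hxv]
      exact hiW (mem_sdiff.1 hv).1
  rcases honly p hpW with hpi | hpj
  · rw [← hpi, hpv, card_singleton]
  · rw [hpj, sdiff_self] at hpv
    exact absurd hpv.symm (singleton_ne_empty v)

theorem not_hasLQ_of_isolated_pair {S : Set (Finset ℕ)} {W a b : Finset ℕ} (ha : a ∈ S)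
    (hb : b ∈ S) (haW : a ⊆ W) (hbW : b ⊆ W) (honly : ∀ h ∈ S, h ⊆ W → h = a ∨ h = b)
    (hab : 2 ≤ #(a \ b)) (hba : 2 ≤ #(b \ a)) : ¬ HasLQ S := by
  rintro ⟨L, -, hLS, hL⟩
  obtain ⟨i, rfl⟩ := List.get_of_mem ((hLS a).2 ha)
  obtain ⟨j, rfl⟩ := List.get_of_mem ((hLS b).2 hb)
  have honly' : ∀ p, L.get p ⊆ W → L.get p = L.get i ∨ L.get p = L.get j :=
    fun p hp => honly _ ((hLS _).1 (L.get_mem p)) hp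
  rcases lt_trichotomy i j with hij | rfl | hji
  · have := hL.card_sdiff_eq_one hij haW hbW honly'
    omega
  · simp at hab
  · have := hL.card_sdiff_eq_one hji hbW haW fun p hp => (honly' p hp).symm
    omega

section hsGens

variable {E : ℕ → ℕ → Prop} {V W : Finset ℕ} {k : ℕ}

lemma exists_pair_of_mem_hsGens {h : Finset ℕ} (hh : h ∈ hsGens E V k) (hW : h ⊆ W)
    (hWcard : #W = k + 4) :
    ∃ x y, x ≠ y ∧ h = W \ {x, y} ∧
      ∃ t ∈ h, (∃ l ∈ h, t < l) ∧ ∀ v ∈ W, t < v → E t v → v = x ∨ v = y := by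
  obtain ⟨-, hcard, t, ht, hl, hfree⟩ := hh
  have hD : #(W \ h) = 2 := by rw [card_sdiff_of_subset hW]; omega
  obtain ⟨x, y, hxy, hD⟩ := card_eq_two.1 hD
  refine ⟨x, y, hxy, by rw [← hD, Finset.sdiff_sdiff_eq_self hW], t, ht, hl,
    fun v hv htv hE => ?_⟩
  have hvD : v ∈ W \ h := mem_sdiff.2 ⟨hv, fun hvh => hfree v hvh htv hE⟩
  simpa [hD] using hvD

lemma sdiff_pair_mem_hsGens {x y t l : ℕ} (hWV : W ⊆ V) (hWcard : #W = k + 4)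
    (hxy : x ≠ y) (hxyW : {x, y} ⊆ W) (ht : t ∈ W \ {x, y}) (hl : l ∈ W \ {x, y})
    (htl : t < l) (hfree : ∀ v ∈ W \ {x, y}, t < v → ¬ E t v) :
    W \ {x, y} ∈ hsGens E V k := by
  refine ⟨sdiff_subset.trans hWV, ?_, t, ht, ⟨l, hl, htl⟩, hfree⟩
  rw [card_sdiff_of_subset hxyW, hWcard, card_pair hxy]
  omega

end hsGens

section ACH

variable {n r : ℕ}

lemma ACHedge_forward_cases (hn : 6 ≤ n) {t : ℕ} (ht : 1 ≤ t) :
    (t = r + 1 ∧ ACHedge n r t (r + 2) ∧ ACHedge n r t (r + n)) ∨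
    (t = r + n - 3 ∧ ACHedge n r t (r + n - 2) ∧ ACHedge n r t (r + n - 1)) ∨
    (∃ a b c, t < a ∧ a < b ∧ b < c ∧ c ≤ r + n ∧
      ACHedge n r t a ∧ ACHedge n r t b ∧ ACHedge n r t c) ∨
    ∀ v, t < v → v ≤ r + n → ACHedge n r t v := by
  rcases (by omega : t ≤ r ∨ t = r + 1 ∨ (r + 2 ≤ t ∧ t ≤ r + n - 5) ∨ t = r + n - 4 ∨
    t = r + n - 3 ∨ r + n - 2 ≤ t) with h | h | h | h | h | h
  · exact .inr (.inr (.inl ⟨r + n - 2, r + n - 1, r + n, by omega, by omega, by omega, le_rfl,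
      by grind [ACHedge], by grind [ACHedge, CHedge],
      by grind [ACHedge, CHedge]⟩))
  · exact .inl ⟨h, by grind [ACHedge, CHedge, Hedge, HE], by grind [ACHedge, CHedge, Hedge, HE]⟩
  · exact .inr (.inr (.inl ⟨t + 1, r + n - 1, r + n, by omega, by omega, by omega, le_rfl,
      by grind [ACHedge, CHedge, Hedge, HE], by grind [ACHedge, CHedge, Hedge, HE],
      by grind [ACHedge, CHedge, Hedge, HE]⟩))
  · exact .inr (.inr (.inl ⟨r + n - 2, r + n - 1, r + n, by omega, by omega, by omega, le_rfl,
      by grind [ACHedge, CHedge, Hedge, HE], by grind [ACHedge, CHedge, Hedge, HE],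
      by grind [ACHedge, CHedge, Hedge, HE]⟩))
  · exact .inr (.inl ⟨h, by grind [ACHedge, CHedge, Hedge, HE],
      by grind [ACHedge, CHedge, Hedge, HE]⟩)
  · refine .inr (.inr (.inr fun v htv hv => ?_))
    rcases (by omega : t = r + n - 2 ∧ v = r + n - 1 ∨ t = r + n - 2 ∧ v = r + n ∨
      t = r + n - 1 ∧ v = r + n) with ⟨rfl, rfl⟩ | ⟨rfl, rfl⟩ | ⟨rfl, rfl⟩ <;>
    grind [ACHedge, CHedge, Hedge, HE]

lemma not_ACHedge_add_sub_three (hn : 6 ≤ n) : ¬ ACHedge n r (r + n - 3) (r + n) := by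
  grind [ACHedge, CHedge, Hedge, HE]

lemma not_ACHedge_add_one {l : ℕ} (hn : 6 ≤ n) (h3 : r + 3 ≤ l) (hl : l < r + n) :
    ¬ ACHedge n r (r + 1) l := by
  grind [ACHedge, CHedge, Hedge, HE]

variable {m k : ℕ}

lemma ACH_gens_in_window (hn : 6 ≤ n) (hm : 1 ≤ m) (hk : m + k + 3 = r + n)
    {V h : Finset ℕ} (hh : h ∈ hsGens (ACHedge n r) V k) (hW : h ⊆ Icc m (r + n)) :
    h = Icc m (r + n) \ {r + n - 2, r + n - 1} ∨ h = Icc m (r + n) \ {r + 2, r + n} := by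
  obtain ⟨x, y, hxy, rfl, t, ht, ⟨l, hl, htl⟩, hnbr⟩ :=
    exists_pair_of_mem_hsGens hh hW (by rw [Nat.card_Icc]; omega)
  simp only [mem_sdiff, mem_Icc, mem_insert, mem_singleton] at ht hl hnbr
  rcases ACHedge_forward_cases (r := r) hn (t := t) (by omega) with
    ⟨rfl, h1, h2⟩ | ⟨rfl, h1, h2⟩ | ⟨a, b, c, ha, hb, hc, hcn, h1, h2, h3⟩ | hall
  · have := hnbr _ (by omega) (by omega) h1
    have := hnbr _ (by omega) (by omega) h2
    right
    congr 1
    ext v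
    simp only [mem_insert, mem_singleton]
    omega
  · have := hnbr _ (by omega) (by omega) h1
    have := hnbr _ (by omega) (by omega) h2
    left
    congr 1
    ext v
    simp only [mem_insert, mem_singleton]
    omega
  · have := hnbr _ (by omega) (by omega) h1
    have := hnbr _ (by omega) (by omega) h2
    have := hnbr _ (by omega) (by omega) h3
    omega
  · have := hnbr l (by omega) htl (hall l htl (by omega))
    omega

lemma ACH_window_sdiff_top_mem (hn : 6 ≤ n) (hm : 1 ≤ m) (hmr : m ≤ r + 1)
    (hk : m + k + 3 = r + n) :
    Icc m (r + n) \ {r + n - 2, r + n - 1} ∈ hsGens (ACHedge n r) (Icc 1 (r + n)) k := by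
  refine sdiff_pair_mem_hsGens (t := r + n - 3) (l := r + n) (Icc_subset_Icc hm le_rfl)
    (by rw [Nat.card_Icc]; omega) (by omega) ?_ ?_ ?_ (by omega) fun v hv hv' => ?_
  all_goals simp only [subset_iff, mem_sdiff, mem_Icc, mem_insert, mem_singleton] at *
  · omega
  · omega
  · omega
  · obtain rfl : v = r + n := by omega
    exact not_ACHedge_add_sub_three hn

lemma ACH_window_sdiff_bottom_mem (hn : 6 ≤ n) (hm : 1 ≤ m) (hmr : m ≤ r + 1)
    (hk : m + k + 3 = r + n) :
    Icc m (r + n) \ {r + 2, r + n} ∈ hsGens (ACHedge n r) (Icc 1 (r + n)) k := by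
  refine sdiff_pair_mem_hsGens (t := r + 1) (l := r + 3) (Icc_subset_Icc hm le_rfl)
    (by rw [Nat.card_Icc]; omega) (by omega) ?_ ?_ ?_ (by omega) fun v hv hv' => ?_
  all_goals simp only [subset_iff, mem_sdiff, mem_Icc, mem_insert, mem_singleton] at *
  · omega
  · omega
  · omega
  · exact not_ACHedge_add_one hn (by omega) (by omega)

end ACH

/-- For `n ≥ 6`, `r ≥ 0` and `n-4 ≤ k ≤ n+r-4`, the ideal
`HS_k(I(ACH_{n,r}ᶜ))` does not have linear quotients. -/
theorem ACH_no_LQ (n r k : ℕ) (hn : 6 ≤ n) (hk1 : n - 4 ≤ k) (hk2 : k ≤ n + r - 4) :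
    ¬ HasLQ (hsGens (ACHedge n r) (Finset.Icc 1 (r + n)) k) := by
  set m := r + n - (k + 4) + 1
  have hm : 1 ≤ m := by omega
  have hmr : m ≤ r + 1 := by omega
  have hk : m + k + 3 = r + n := by omega
  refine not_hasLQ_of_isolated_pair (W := Icc m (r + n))
    (ACH_window_sdiff_top_mem hn hm hmr hk) (ACH_window_sdiff_bottom_mem hn hm hmr hk)
    sdiff_subset sdiff_subset
    (fun h hh hW => ACH_gens_in_window hn hm hk hh hW) ?_ ?_
  · refine (card_pair (by omega : r + 2 ≠ r + n)).symm.le.trans (card_le_card fun v hv => ?_)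
    simp only [mem_sdiff, mem_Icc, mem_insert, mem_singleton] at hv ⊢
    omega
  · refine (card_pair (by omega : r + n - 2 ≠ r + n - 1)).symm.le.trans
      (card_le_card fun v hv => ?_)
    simp only [mem_sdiff, mem_Icc, mem_insert, mem_singleton] at hv ⊢
    omega
end

section
/- Let G be a chordal graph and H an induced subgraph of G. If HS_k(I(G^c)) has linear quotients for some k, then HS_k(I(H^c)) also has linear quotients. -/
open Finset

/-!
The generators of `HS_k(I(Hᶜ))` are exactly those of `HS_k(I(Gᶜ))` supported on `W`, so it
suffices to restrict a linear-quotients order to them. The restricted order still has linear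
quotients: if `g_p \ g_j = {v}` with `v ∈ g_i` and `g_i, g_j ⊆ W`, then `g_p ⊆ g_j ∪ {v} ⊆ W`,
so the witness `g_p` survives the restriction.
-/

theorem LQList.filter_subset {L : List (Finset ℕ)} (hnd : L.Nodup) (hL : LQList L)
    (W : Finset ℕ) : LQList (L.filter (· ⊆ W)) := by
  set L' := L.filter (· ⊆ W)
  obtain ⟨f, hf⟩ := List.sublist_iff_exists_fin_orderEmbedding_get_eq.mp
    (List.filter_sublist : L'.Sublist L)
  have hL'W : ∀ i, L'.get i ⊆ W := fun i => by
    simpa using (List.mem_filter.mp (List.get_mem L' i)).2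
  intro i j hij
  obtain ⟨p, hpj, v, hpv, hvi⟩ := hL (f i) (f j) (f.lt_iff_lt.mpr hij)
  rw [← hf i, ← hf j] at hvi
  rw [← hf j] at hpv
  have hpW : L.get p ⊆ W := by
    have hvW : v ∈ W := hL'W i (Finset.mem_sdiff.mp hvi).1
    calc L.get p ⊆ L.get p \ L'.get j ∪ L'.get j := le_sdiff_sup
      _ ⊆ W := by
        rw [hpv]
        exact Finset.union_subset (Finset.singleton_subset_iff.mpr hvW) (hL'W j)
  obtain ⟨p', hp'⟩ := List.mem_iff_get.mp
    (List.mem_filter.mpr ⟨List.get_mem L p, by simpa using hpW⟩ : L.get p ∈ L')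
  have hfp' : f p' = p := List.nodup_iff_injective_get.mp hnd (by rw [← hf p', hp'])
  exact ⟨p', f.lt_iff_lt.mp (hfp' ▸ hpj), v, hp' ▸ hpv, hvi⟩

theorem HasLQ.sep_subset {S : Set (Finset ℕ)} (h : HasLQ S) (W : Finset ℕ) :
    HasLQ {g ∈ S | g ⊆ W} := by
  obtain ⟨L, hnd, hmem, hL⟩ := h
  exact ⟨L.filter (· ⊆ W), hnd.filter _, fun g => by simp [hmem], hL.filter_subset hnd W⟩

theorem hsGens_eq_sep_of_subset (E : ℕ → ℕ → Prop) {V W : Finset ℕ} (k : ℕ) (hW : W ⊆ V) :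
    hsGens E W k = {g ∈ hsGens E V k | g ⊆ W} := by
  ext g
  simp only [hsGens, Set.mem_ofPred_eq]
  exact ⟨fun ⟨hgW, hg⟩ => ⟨⟨hgW.trans hW, hg⟩, hgW⟩, fun ⟨⟨_, hg⟩, hgW⟩ => ⟨hgW, hg⟩⟩

theorem LQ_induced_general (E : ℕ → ℕ → Prop) (V W : Finset ℕ) (k : ℕ)
    (hW : W ⊆ V)
    (h : HasLQ (hsGens E V k)) : HasLQ (hsGens E W k) := by
  rw [hsGens_eq_sep_of_subset E k hW]
  exact h.sep_subset W

/-- Let `G` be a chordal graph (with perfect elimination ordering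
given by the natural order on `V`) and `H` the induced subgraph on `W ⊆ V`. If
`HS_k(I(Gᶜ))` has linear quotients then so does `HS_k(I(Hᶜ))`. -/
theorem LQ_induced (E : ℕ → ℕ → Prop) (V W : Finset ℕ) (k : ℕ)
    (hchordal : IsPEO E V) (hW : W ⊆ V)
    (h : HasLQ (hsGens E V k)) : HasLQ (hsGens E W k) :=
  LQ_induced_general E V W k hW h
end

section
/- Let n ≥ 6, r ≥ 0, and k ≥ 2 with k ≠ n-4 and 2 ≤ k ≤ r+n-4. Then HS_k(I(CH_{n,r}^c)) has linear quotients with respect to the lexicographic order induced by x_1 > x_2 > ··· > x_{r+n}. -/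
open Finset

/-!
Linear quotients follow from an exchange property: whenever `g >_lex f` are generators there are
`v ∈ g \ f` and `u ∈ f` with `v < u` such that `f - u + v` is again a generator; it then precedes
`f` and `(f - u + v) \ f = {v}`.

Write `n = m + 6`. The generators of `HS_k` are the `(k+2)`-subsets `h` of `{1, …, r+n}` having a
vertex `t` whose larger elements in `h` are all non-neighbours of `t`; for `CH_{n,r}` this unfolds
into five explicit types. Let `v₀` be the least element of `g \ f`. If `f` has a single element
`u` above `v₀`, then `g = f - u + v₀` by counting. Otherwise a case analysis on the type of `f`
yields the exchange, mostly with `v = v₀` and `u` the least element of `f` above `v₀`. The only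
obstruction is `f ⊇ {r+1, r+n-1}`, `r+2 ∉ f`, `v₀ = r+2`, where `f - (r+n-1) + (r+2)` could be the
whole path `{r+1, …, r+n-2}`: this set is not a generator and has `n - 2` elements, which is
excluded by `k ≠ n - 4`.
-/

namespace List

variable {α : Type*} [LinearOrder α]

theorem head_le_of_mem_of_pairwise {c x : α} {l : List α} (h : (c :: l).Pairwise (· < ·))
    (hx : x ∈ c :: l) : c ≤ x := by
  rcases mem_cons.1 hx with rfl | hx
  · exact le_rfl
  · exact (rel_of_pairwise_cons h hx).le

theorem exists_of_lex_lt {l₁ l₂ : List α} (h : Lex (· < ·) l₁ l₂) (h₁ : l₁.Pairwise (· < ·))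
    (h₂ : l₂.Pairwise (· < ·)) (hlen : l₂.length ≤ l₁.length) :
    ∃ v ∈ l₁, v ∉ l₂ ∧ ∀ x < v, (x ∈ l₁ ↔ x ∈ l₂) := by
  induction h with
  | nil => simp at hlen
  | @cons c l₁ l₂ h ih =>
    obtain ⟨v, hv, hv₂, hagree⟩ := ih h₁.of_cons h₂.of_cons (by simpa using hlen)
    have hcv : c < v := rel_of_pairwise_cons h₁ hv
    refine ⟨v, mem_cons_of_mem _ hv, by simp [hcv.ne', hv₂], fun x hx => ?_⟩
    simp only [mem_cons, hagree x hx]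
  | @rel c₁ l₁ c₂ l₂ hc =>
    refine ⟨c₁, mem_cons_self, fun h => (head_le_of_mem_of_pairwise h₂ h).not_gt hc,
      fun x hx => ?_⟩
    have hx₁ := fun h => (head_le_of_mem_of_pairwise h₁ h).not_gt hx
    have hx₂ := fun h => (head_le_of_mem_of_pairwise h₂ h).not_gt (hx.trans hc)
    exact iff_of_false hx₁ hx₂

theorem lex_lt_of_exists {l₁ l₂ : List α} (h₁ : l₁.Pairwise (· < ·)) (h₂ : l₂.Pairwise (· < ·))
    (hlen : l₁.length ≤ l₂.length) {v : α} (hv : v ∈ l₁) (hv₂ : v ∉ l₂)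
    (hagree : ∀ x < v, (x ∈ l₁ ↔ x ∈ l₂)) : Lex (· < ·) l₁ l₂ := by
  induction l₁ generalizing l₂ with
  | nil => simp at hv
  | cons c l₁ ih =>
    cases l₂ with
    | nil => simp at hlen
    | cons d l₂ =>
      have hcv : c ≤ v := head_le_of_mem_of_pairwise h₁ hv
      rcases lt_trichotomy c d with hcd | rfl | hdc
      · exact .rel hcd
      · have tail_iff : ∀ {l : List α}, (c :: l).Pairwise (· < ·) →
            ∀ x, x ∈ l ↔ x ∈ c :: l ∧ c < x :=
          fun h x => ⟨fun hx => ⟨mem_cons_of_mem _ hx, rel_of_pairwise_cons h hx⟩,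
            fun ⟨hx, hcx⟩ => (mem_cons.1 hx).resolve_left hcx.ne'⟩
        refine .cons (ih h₁.of_cons h₂.of_cons (by simpa using hlen) ?_
          (fun h => hv₂ (mem_cons_of_mem _ h)) ?_)
        · exact (tail_iff h₁ v).2 ⟨hv, hcv.lt_of_ne fun h => hv₂ (h ▸ mem_cons_self)⟩
        · intro x hx
          rw [tail_iff h₁, tail_iff h₂, hagree x hx]
      · have hd := (hagree d (hdc.trans_le hcv)).2 mem_cons_self
        exact absurd (head_le_of_mem_of_pairwise h₁ hd) hdc.not_ge

end List

theorem lexGt_iff_exists {f g : Finset ℕ} (hcard : g.card = f.card) :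
    lexGt g f ↔ ∃ v ∈ g, v ∉ f ∧ ∀ x < v, (x ∈ g ↔ x ∈ f) := by
  have hg := (g.sortedLT_sort).pairwise
  have hf := (f.sortedLT_sort).pairwise
  simp only [lexGt]
  constructor
  · intro h
    obtain ⟨v, hv, hvf, hagree⟩ := List.exists_of_lex_lt h hg hf (by simp [hcard])
    simp only [mem_sort] at hv hvf hagree
    exact ⟨v, hv, hvf, hagree⟩
  · rintro ⟨v, hv, hvf, hagree⟩
    exact List.lex_lt_of_exists hg hf (by simp [hcard]) ((mem_sort _).2 hv)
      (by simpa using hvf) (by simpa using hagree)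

theorem lexGt_asymm {g f : Finset ℕ} (h : lexGt g f) : ¬ lexGt f g :=
  asymm (r := List.Lex (· < ·)) h

namespace Finset

theorem exists_mem_add_one_notMem {s : Finset ℕ} {a b : ℕ} (ha : a ∈ s) (hb : b ∉ s)
    (hab : a ≤ b) : ∃ x ∈ s, a ≤ x ∧ x < b ∧ x + 1 ∉ s := by
  induction b with
  | zero => exact absurd (Nat.le_zero.1 hab ▸ ha) hb
  | succ b ih =>
    have hab' : a ≤ b := Nat.le_of_lt_succ (hab.lt_of_ne (ne_of_mem_of_not_mem ha hb))
    by_cases hbs : b ∈ s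
    · exact ⟨b, hbs, hab', b.lt_succ_self, hb⟩
    · obtain ⟨x, hx, hax, hxb, hx1⟩ := ih hbs hab'
      exact ⟨x, hx, hax, hxb.trans b.lt_succ_self, hx1⟩

variable {α : Type*} [DecidableEq α]

theorem mem_insert_erase_of_mem {f : Finset α} {u v x : α} (hx : x ∈ f) (hxu : x ≠ u) :
    x ∈ insert v (f.erase u) :=
  mem_insert_of_mem (mem_erase.2 ⟨hxu, hx⟩)

theorem notMem_insert_erase {f : Finset α} {u v x : α} (hxv : x ≠ v) (hx : x ∉ f ∨ x = u) :
    x ∉ insert v (f.erase u) := by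
  rw [mem_insert, mem_erase]
  tauto

theorem card_insert_erase {f : Finset α} {u v : α} (hu : u ∈ f) (hv : v ∉ f) :
    (insert v (f.erase u)).card = f.card := by
  rw [card_insert_of_notMem fun h => hv (mem_of_mem_erase h), card_erase_add_one hu]

end Finset

def ExchangeStep (S : Set (Finset ℕ)) (f g : Finset ℕ) : Prop :=
  ∃ v ∈ g, v ∉ f ∧ ∃ u ∈ f, v < u ∧ insert v (f.erase u) ∈ S

theorem lqList_of_exchangeStep {S : Set (Finset ℕ)} {L : List (Finset ℕ)}
    (hL : ∀ h, h ∈ L ↔ h ∈ S) (hsort : L.Pairwise lexGt)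
    (hex : ∀ f ∈ S, ∀ g ∈ S, lexGt g f → ExchangeStep S f g) : LQList L := by
  intro i j hij
  obtain ⟨v, hvg, hvf, u, hu, hvu, hS⟩ :=
    hex _ ((hL _).1 (L.get_mem j)) _ ((hL _).1 (L.get_mem i)) (hsort.rel_get_of_lt hij)
  obtain ⟨p, hp⟩ := List.mem_iff_get.1 ((hL _).2 hS)
  have hlex : lexGt (L.get p) (L.get j) := by
    rw [hp, lexGt_iff_exists (card_insert_erase hu hvf)]
    refine ⟨v, mem_insert_self _ _, hvf, fun x hx => ?_⟩
    rw [mem_insert, mem_erase]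
    exact ⟨fun h => h.elim (fun h => absurd h hx.ne) And.right,
      fun h => .inr ⟨(hx.trans hvu).ne, h⟩⟩
  refine ⟨p, lt_of_not_ge fun hjp => ?_, v, ?_, mem_sdiff.2 ⟨hvg, hvf⟩⟩
  · rcases hjp.lt_or_eq with hjp | rfl
    · exact lexGt_asymm hlex (hsort.rel_get_of_lt hjp)
    · exact lexGt_asymm hlex hlex
  · rw [hp, insert_sdiff_of_notMem _ hvf, sdiff_eq_empty_iff_subset.2 (erase_subset u _),
      insert_empty]

theorem exists_eq_insert_erase_or_lt_lt {f g : Finset ℕ} {v : ℕ} (hcard : f.card = g.card)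
    (hvg : v ∈ g) (hvf : v ∉ f) (hagree : ∀ x < v, (x ∈ g ↔ x ∈ f)) :
    (∃ u ∈ f, v < u ∧ g = insert v (f.erase u)) ∨
      ∃ a ∈ f, ∃ b ∈ f, v < a ∧ a < b ∧ ∀ l ∈ f, v < l → a ≤ l := by
  have hmem_of_lt : ∀ x ∈ f, x < v → x ∈ g := fun x hx hxv => (hagree x hxv).2 hx
  have habove : (f.filter (v < ·)).Nonempty := by
    by_contra hempty
    rw [not_nonempty_iff_eq_empty, filter_eq_empty_iff] at hempty
    have hfg : f ⊆ g := fun x hx =>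
      hmem_of_lt x hx ((not_lt.1 (hempty hx)).lt_of_ne (ne_of_mem_of_not_mem hx hvf))
    exact hvf (eq_of_subset_of_card_le hfg hcard.ge ▸ hvg)
  obtain ⟨ha, hva⟩ := mem_filter.1 (min'_mem _ habove)
  set a := (f.filter (v < ·)).min' habove
  have hamin : ∀ l ∈ f, v < l → a ≤ l := fun l hl hvl => min'_le _ l (mem_filter.2 ⟨hl, hvl⟩)
  by_cases hb : ∃ b ∈ f, a < b
  · obtain ⟨b, hb, hab⟩ := hb
    exact .inr ⟨a, ha, b, hb, hva, hab, hamin⟩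
  simp only [not_exists, not_and, not_lt] at hb
  refine .inl ⟨a, ha, hva, (eq_of_subset_of_card_le ?_ ?_).symm⟩
  · refine insert_subset hvg fun x hx => ?_
    obtain ⟨hxa, hxf⟩ := mem_erase.1 hx
    refine hmem_of_lt x hxf (lt_of_not_ge fun hvx => hxa ?_)
    have hvx := hvx.lt_of_ne (ne_of_mem_of_not_mem hxf hvf).symm
    exact (hb x hxf).antisymm (hamin x hxf hvx)
  · rw [card_insert_erase ha hvf, hcard]

theorem hedge_iff_s16 {m a b : ℕ} (ha : 1 ≤ a) (hab : a < b) (hb : b ≤ m + 6) :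
    Hedge (m + 6) a b ↔ b = a + 1 ∧ a ≤ m + 1 ∨ a = m + 2 ∧ b = m + 4 ∨ a = m + 3 ∧ b = m + 4 ∨
      b = m + 5 ∧ a ≠ 1 ∨ b = m + 6 ∧ a ≠ m + 3 := by
  have e5 : m + 6 - 5 = m + 1 := rfl
  have e4 : m + 6 - 4 = m + 2 := rfl
  have e3 : m + 6 - 3 = m + 3 := rfl
  have e2 : m + 6 - 2 = m + 4 := rfl
  have e1 : m + 6 - 1 = m + 5 := rfl
  unfold Hedge HE
  rw [e5, e4, e3, e2, e1]
  constructor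
  · rintro (h | h | h | h | h | h | h | h | h | h) <;> omega
  · rintro (⟨rfl, h⟩ | ⟨rfl, rfl⟩ | ⟨rfl, rfl⟩ | ⟨rfl, h⟩ | ⟨rfl, h⟩)
    · exact .inl (.inl ⟨ha, h, rfl⟩)
    · exact .inl (.inr (.inl ⟨rfl, rfl⟩))
    · exact .inr (.inr (.inr (.inl ⟨rfl, rfl⟩)))
    · exact .inr (.inr (.inr (.inr (.inl ⟨rfl, by omega, by omega, by omega⟩))))
    · exact .inr (.inr (.inr (.inr (.inr ⟨rfl, ha, by omega, h, by omega⟩))))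

def NonAdjAbove (r m t l : ℕ) : Prop :=
  t ≤ r ∧ r + 1 ≤ l ∧ l ≤ r + m + 4 ∨
  t = r + 1 ∧ (r + 3 ≤ l ∧ l ≤ r + m + 4 ∨ l = r + m + 5) ∨
  r + 2 ≤ t ∧ t ≤ r + m + 1 ∧ t + 2 ≤ l ∧ l ≤ r + m + 4 ∨
  t = r + m + 2 ∧ l = r + m + 3 ∨
  t = r + m + 3 ∧ l = r + m + 6

theorem not_chEdge_iff {r m t l : ℕ} (ht : 1 ≤ t) (htl : t < l) (hl : l ≤ r + m + 6) :
    ¬ CHedge (m + 6) r t l ↔ NonAdjAbove r m t l := by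
  rw [not_iff_comm]
  have e1 : r + (m + 6) - 1 = r + m + 5 := rfl
  unfold CHedge
  rw [e1]
  rcases le_or_gt t r with htr | htr
  · have : ¬ (r < t ∧ r < l ∧ Hedge (m + 6) (t - r) (l - r)) := by omega
    simp only [this, false_or, NonAdjAbove]
    omega
  obtain ⟨a, rfl⟩ : ∃ a, t = r + a := ⟨t - r, by omega⟩
  obtain ⟨b, rfl⟩ : ∃ b, l = r + b := ⟨l - r, by omega⟩
  have h2 : ¬ (1 ≤ r + a ∧ r + a ≤ r ∧ 1 ≤ r + b ∧ r + b ≤ r ∧ r + a ≠ r + b) := by omega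
  have h3 : ¬ (1 ≤ r + a ∧ r + a ≤ r ∧ (r + b = r + m + 5 ∨ r + b = r + (m + 6))) := by omega
  have h4 : ¬ (1 ≤ r + b ∧ r + b ≤ r ∧ (r + a = r + m + 5 ∨ r + a = r + (m + 6))) := by omega
  simp only [h2, h3, h4, or_false, Nat.add_sub_cancel_left,
    hedge_iff_s16 (m := m) (a := a) (b := b) (by omega) (by omega) (by omega), NonAdjAbove]
  constructor
  · intro hn
    refine ⟨by omega, by omega, ?_⟩
    rcases (by omega : a = 1 ∨ (2 ≤ a ∧ a ≤ m + 1) ∨ a = m + 2 ∨ a = m + 3 ∨ m + 4 ≤ a) with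
      h | h | h | h | h <;> omega
  · rintro ⟨-, -, hp⟩ hn
    rcases hp with h | h | h | h | h <;> rcases hn with h' | h' | h' | h' | h' <;> omega

/-- With `N = r + m + 6`, call the vertices `N - 4, …, N` of `CH_{m+6,r}` `q, p, d, e, z`; the
clique is `{1, …, r}` and `{r + 1, …, d}` is the path-like part. The constructors correspond to
the vertex `t ∈ h` whose larger elements in `h` (there is one) are all non-adjacent to `t`:
`t = p`, `t = r + 1` with `e ∈ h`, `t` the largest clique vertex of `h`, `t = q`, and `t = x`
before a gap of the path. -/
inductive CHType (r m : ℕ) (h : Finset ℕ) : Prop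
  | pz : r + m + 3 ∈ h → r + m + 6 ∈ h → r + m + 4 ∉ h → r + m + 5 ∉ h → CHType r m h
  | first : r + 1 ∈ h → r + 2 ∉ h → r + m + 5 ∈ h → r + m + 6 ∉ h → CHType r m h
  | clique {c y : ℕ} : c ∈ h → c ≤ r → y ∈ h → r + 1 ≤ y → y ≤ r + m + 4 → r + m + 5 ∉ h →
      r + m + 6 ∉ h → CHType r m h
  | qp : r + m + 2 ∈ h → r + m + 3 ∈ h → r + m + 4 ∉ h → r + m + 5 ∉ h → r + m + 6 ∉ h →
      CHType r m h
  | gap {x y : ℕ} : x ∈ h → r + 1 ≤ x → x ≤ r + m + 1 → x + 1 ∉ h → y ∈ h → x + 2 ≤ y →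
      y ≤ r + m + 4 → r + m + 5 ∉ h → r + m + 6 ∉ h → CHType r m h

theorem CHType.exists_nonAdjAbove {r m : ℕ} {h : Finset ℕ} (hsub : h ⊆ Icc 1 (r + m + 6))
    (ht : CHType r m h) :
    ∃ t ∈ h, (∃ l ∈ h, t < l) ∧ ∀ l ∈ h, t < l → NonAdjAbove r m t l := by
  have hle : ∀ l ∈ h, l ≤ r + m + 6 := fun l hl => (mem_Icc.1 (hsub hl)).2
  unfold NonAdjAbove
  rcases ht with ⟨hp, hz, hd, he⟩ | ⟨h1, h2, he, hz⟩ | ⟨hc, hcr, hy, hy1, hy2, he, hz⟩ |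
    ⟨hq, hp, hd, he, hz⟩ | ⟨hx, hx1, hx2, hx3, hy, hy1, hy2, he, hz⟩
  · refine ⟨_, hp, ⟨_, hz, by omega⟩, fun l hl htl => ?_⟩
    have := hle l hl
    have := ne_of_mem_of_not_mem hl hd
    have := ne_of_mem_of_not_mem hl he
    omega
  · refine ⟨_, h1, ⟨_, he, by omega⟩, fun l hl htl => ?_⟩
    have := hle l hl
    have := ne_of_mem_of_not_mem hl h2
    have := ne_of_mem_of_not_mem hl hz
    omega
  · have hne : (h.filter (· ≤ r)).Nonempty := ⟨_, mem_filter.2 ⟨hc, hcr⟩⟩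
    obtain ⟨ht, htr⟩ := mem_filter.1 (max'_mem _ hne)
    refine ⟨_, ht, ⟨_, hy, by omega⟩, fun l hl htl => ?_⟩
    have := hle l hl
    have : r < l := lt_of_not_ge fun hlr => htl.not_ge (le_max' _ l (mem_filter.2 ⟨hl, hlr⟩))
    have := ne_of_mem_of_not_mem hl he
    have := ne_of_mem_of_not_mem hl hz
    omega
  · refine ⟨_, hq, ⟨_, hp, by omega⟩, fun l hl htl => ?_⟩
    have := hle l hl
    have := ne_of_mem_of_not_mem hl hd
    have := ne_of_mem_of_not_mem hl he
    have := ne_of_mem_of_not_mem hl hz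
    omega
  · refine ⟨_, hx, ⟨_, hy, by omega⟩, fun l hl htl => ?_⟩
    have := hle l hl
    have := ne_of_mem_of_not_mem hl hx3
    have := ne_of_mem_of_not_mem hl he
    have := ne_of_mem_of_not_mem hl hz
    omega

theorem chType_of_nonAdjAbove {r m t l₀ : ℕ} {h : Finset ℕ} (hsub : h ⊆ Icc 1 (r + m + 6))
    (ht : t ∈ h) (hl₀ : l₀ ∈ h) (htl₀ : t < l₀) (hfree : ∀ l ∈ h, t < l → NonAdjAbove r m t l) :
    CHType r m h := by
  have hle : ∀ l ∈ h, l ≤ r + m + 6 := fun l hl => (mem_Icc.1 (hsub hl)).2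
  have hnot : ∀ l, t < l → ¬ NonAdjAbove r m t l → l ∉ h :=
    fun l htl hn hl => hn (hfree l hl htl)
  have hl₀' := hfree l₀ hl₀ htl₀
  have := hle l₀ hl₀
  unfold NonAdjAbove at hnot hl₀'
  rcases le_or_gt t r with htr | htr
  · exact .clique ht htr hl₀ (by omega) (by omega) (hnot _ (by omega) (by omega))
      (hnot _ (by omega) (by omega))
  rcases (by omega : t = r + 1 ∨ (r + 2 ≤ t ∧ t ≤ r + m + 1) ∨ t = r + m + 2 ∨ t = r + m + 3) with
    rfl | ht' | rfl | rfl
  · have h2 := hnot (r + 2) (by omega) (by omega)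
    have hz := hnot (r + m + 6) (by omega) (by omega)
    by_cases he : r + m + 5 ∈ h
    · exact .first ht h2 he hz
    · have := ne_of_mem_of_not_mem hl₀ he
      exact .gap ht le_rfl (by omega) h2 hl₀ (by omega) (by omega) he hz
  · exact .gap ht (by omega) ht'.2 (hnot _ (by omega) (by omega)) hl₀ (by omega) (by omega)
      (hnot _ (by omega) (by omega)) (hnot _ (by omega) (by omega))
  · obtain rfl : l₀ = r + m + 3 := by omega
    exact .qp ht hl₀ (hnot _ (by omega) (by omega)) (hnot _ (by omega) (by omega))
      (hnot _ (by omega) (by omega))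
  · obtain rfl : l₀ = r + m + 6 := by omega
    exact .pz ht hl₀ (hnot _ (by omega) (by omega)) (hnot _ (by omega) (by omega))

def chGens (r m k : ℕ) : Set (Finset ℕ) :=
  {h | h ⊆ Icc 1 (r + m + 6) ∧ h.card = k + 2 ∧ CHType r m h}

theorem hsGens_chEdge (r m k : ℕ) :
    hsGens (CHedge (m + 6) r) (Icc 1 (r + (m + 6))) k = chGens r m k := by
  ext h
  simp only [hsGens, chGens, Set.mem_ofPred_eq, ← Nat.add_assoc]
  refine and_congr_right fun hsub => and_congr_right fun _ => ?_
  have hbd : ∀ l ∈ h, 1 ≤ l ∧ l ≤ r + m + 6 := fun l hl => mem_Icc.1 (hsub hl)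
  constructor
  · rintro ⟨t, ht, ⟨l₀, hl₀, htl₀⟩, hfree⟩
    exact chType_of_nonAdjAbove hsub ht hl₀ htl₀ fun l hl htl =>
      (not_chEdge_iff (r := r) (m := m) (hbd t ht).1 htl (hbd l hl).2).1 (hfree l hl htl)
  · intro hT
    obtain ⟨t, ht, hl₀, hfree⟩ := hT.exists_nonAdjAbove hsub
    exact ⟨t, ht, hl₀, fun l hl htl =>
      (not_chEdge_iff (r := r) (m := m) (hbd t ht).1 htl (hbd l hl).2).2 (hfree l hl htl)⟩

theorem le_of_mem_chGens {r m k : ℕ} {h : Finset ℕ} (hh : h ∈ chGens r m k) {x : ℕ}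
    (hx : x ∈ h) : x ≤ r + m + 6 :=
  (mem_Icc.1 (hh.1 hx)).2

theorem chType_of_subset_Icc {r m : ℕ} {h : Finset ℕ} (hsub : h ⊆ Icc (r + 1) (r + m + 4))
    (h1 : r + 1 ∈ h) (hp : r + m + 3 ∈ h) (hcard : h.card ≠ m + 4) : CHType r m h := by
  have hout : ∀ x, r + m + 4 < x → x ∉ h := fun x hx hxh => by
    have := mem_Icc.1 (hsub hxh)
    omega
  have he := hout (r + m + 5) (by omega)
  have hz := hout (r + m + 6) (by omega)
  by_cases hqd : r + m + 2 ∈ h ∧ r + m + 4 ∉ h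
  · exact .qp hqd.1 hp hqd.2 he hz
  obtain ⟨w, hw, hw₁, hw₂⟩ : ∃ w ∉ h, r + 2 ≤ w ∧ w ≤ r + m + 2 := by
    by_contra! hall
    have hq : r + m + 2 ∈ h := by
      by_contra hq
      have := hall _ hq
      omega
    have hd : r + m + 4 ∈ h := by
      by_contra hd
      exact hqd ⟨hq, hd⟩
    have hIcc : Icc (r + 1) (r + m + 4) ⊆ h := fun j hj => by
      rw [mem_Icc] at hj
      by_contra hjh
      have := hall j hjh
      have := ne_of_mem_of_not_mem h1 hjh
      have := ne_of_mem_of_not_mem hp hjh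
      have := ne_of_mem_of_not_mem hd hjh
      omega
    apply hcard
    rw [Subset.antisymm hsub hIcc, Nat.card_Icc]
    omega
  obtain ⟨x, hx, hx₁, hxw, hx1⟩ := exists_mem_add_one_notMem h1 hw (by omega)
  exact .gap hx hx₁ (by omega) hx1 hp (by omega) (by omega) he hz

/-- The data of an exchange for `g >_lex f` once `f` is known to have two elements above `v₀`. -/
structure ExchangeSetup (r m k : ℕ) (f g : Finset ℕ) (v₀ a b : ℕ) : Prop where
  mem_f : f ∈ chGens r m k
  mem_g : g ∈ chGens r m k
  v₀_mem : v₀ ∈ g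
  v₀_notMem : v₀ ∉ f
  agree : ∀ x < v₀, (x ∈ g ↔ x ∈ f)
  a_mem : a ∈ f
  b_mem : b ∈ f
  v₀_lt_a : v₀ < a
  a_lt_b : a < b
  a_le : ∀ l ∈ f, v₀ < l → a ≤ l

namespace ExchangeSetup

variable {r m k : ℕ} {f g : Finset ℕ} {v₀ a b : ℕ}

theorem step (H : ExchangeSetup r m k f g v₀ a b) {v u : ℕ} (hvg : v ∈ g) (hvf : v ∉ f)
    (hu : u ∈ f) (hvu : v < u) (ht : CHType r m (insert v (f.erase u))) :
    ExchangeStep (chGens r m k) f g :=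
  ⟨v, hvg, hvf, u, hu, hvu, insert_subset (H.mem_g.1 hvg) ((erase_subset u f).trans H.mem_f.1),
    (card_insert_erase hu hvf).trans H.mem_f.2.1, ht⟩

theorem add_one_notMem_or (H : ExchangeSetup r m k f g v₀ a b) : v₀ + 1 ∉ f ∨ v₀ + 1 = a :=
  or_iff_not_imp_left.2 fun h =>
    (Nat.le_antisymm (H.a_le _ (not_not.1 h) v₀.lt_succ_self) H.v₀_lt_a).symm

theorem of_v₀_le (H : ExchangeSetup r m k f g v₀ a b) (he : r + m + 5 ∉ f) (hz : r + m + 6 ∉ f)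
    {w : ℕ} (hw : w ∈ f) (hw₁ : r + 1 ≤ w) (hw₂ : w ≤ r + m + 4) (hv₀ : v₀ ≤ r) :
    ExchangeStep (chGens r m k) f g := by
  have hva := H.v₀_lt_a
  have hab := H.a_lt_b
  have hb := le_of_mem_chGens H.mem_f H.b_mem
  have hbe := ne_of_mem_of_not_mem H.b_mem he
  have hbz := ne_of_mem_of_not_mem H.b_mem hz
  obtain ⟨y, hy, hya, hy₁, hy₂⟩ : ∃ y ∈ f, y ≠ a ∧ r + 1 ≤ y ∧ y ≤ r + m + 4 := by
    by_cases har : a ≤ r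
    · exact ⟨w, hw, by omega, hw₁, hw₂⟩
    · exact ⟨b, H.b_mem, H.a_lt_b.ne', by omega, by omega⟩
  exact H.step H.v₀_mem H.v₀_notMem H.a_mem hva <|
    .clique (mem_insert_self _ _) hv₀ (mem_insert_erase_of_mem hy hya) hy₁ hy₂
      (notMem_insert_erase (by omega) (.inl he)) (notMem_insert_erase (by omega) (.inl hz))

theorem of_clique (H : ExchangeSetup r m k f g v₀ a b) {c : ℕ} (hc : c ∈ f) (hcr : c ≤ r)
    (he : r + m + 5 ∉ f) (hz : r + m + 6 ∉ f) (hv₀ : r < v₀) :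
    ExchangeStep (chGens r m k) f g := by
  have hva := H.v₀_lt_a
  have ha := le_of_mem_chGens H.mem_f H.a_mem
  have hae := ne_of_mem_of_not_mem H.a_mem he
  have haz := ne_of_mem_of_not_mem H.a_mem hz
  exact H.step H.v₀_mem H.v₀_notMem H.a_mem hva <|
    .clique (mem_insert_erase_of_mem hc (by omega)) hcr (mem_insert_self _ _) hv₀ (by omega)
      (notMem_insert_erase (by omega) (.inl he)) (notMem_insert_erase (by omega) (.inl hz))

theorem of_pz (H : ExchangeSetup r m k f g v₀ a b) (hp : r + m + 3 ∈ f) (hz : r + m + 6 ∈ f)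
    (hd : r + m + 4 ∉ f) (he : r + m + 5 ∉ f) : ExchangeStep (chGens r m k) f g := by
  have hva := H.v₀_lt_a
  have hab := H.a_lt_b
  have hb := le_of_mem_chGens H.mem_f H.b_mem
  have had := ne_of_mem_of_not_mem H.a_mem hd
  have hae := ne_of_mem_of_not_mem H.a_mem he
  set f' := insert v₀ (f.erase (r + m + 6))
  have hv₀' : v₀ ∈ f' := mem_insert_self _ _
  have hp' : r + m + 3 ∈ f' := mem_insert_erase_of_mem hp (by omega)
  have hd' : r + m + 4 ∉ f' := notMem_insert_erase (by omega) (.inl hd)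
  have he' : r + m + 5 ∉ f' := notMem_insert_erase (by omega) (.inl he)
  have hz' : r + m + 6 ∉ f' := notMem_insert_erase (by omega) (.inr rfl)
  refine H.step H.v₀_mem H.v₀_notMem hz (by omega) ?_
  by_cases hc : ∃ c ∈ f', c ≤ r
  · obtain ⟨c, hc, hcr⟩ := hc
    exact .clique hc hcr hp' (by omega) (by omega) he' hz'
  by_cases hq : r + m + 2 ∈ f'
  · exact .qp hq hp' hd' he' hz'
  have hrv : r < v₀ := lt_of_not_ge fun h => hc ⟨v₀, hv₀', h⟩
  have hvq := ne_of_mem_of_not_mem hv₀' hq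
  obtain ⟨x, hx, hvx, hxq, hx1⟩ := exists_mem_add_one_notMem hv₀' hq (by omega)
  exact .gap hx (by omega) (by omega) hx1 hp' (by omega) (by omega) he' hz'

theorem of_qp (H : ExchangeSetup r m k f g v₀ a b) (hq : r + m + 2 ∈ f) (hp : r + m + 3 ∈ f)
    (hd : r + m + 4 ∉ f) (he : r + m + 5 ∉ f) (hz : r + m + 6 ∉ f) (hv₀ : r < v₀) :
    ExchangeStep (chGens r m k) f g := by
  have hva := H.v₀_lt_a
  have ha := le_of_mem_chGens H.mem_f H.a_mem
  have had := ne_of_mem_of_not_mem H.a_mem hd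
  have hae := ne_of_mem_of_not_mem H.a_mem he
  have haz := ne_of_mem_of_not_mem H.a_mem hz
  have hvq := ne_of_mem_of_not_mem hq H.v₀_notMem
  have haq : a ≤ r + m + 2 := H.a_le _ hq (by omega)
  have he' : r + m + 5 ∉ insert v₀ (f.erase a) := notMem_insert_erase (by omega) (.inl he)
  have hz' : r + m + 6 ∉ insert v₀ (f.erase a) := notMem_insert_erase (by omega) (.inl hz)
  refine H.step H.v₀_mem H.v₀_notMem H.a_mem hva ?_
  rcases haq.lt_or_eq with haq | rfl
  · exact .qp (mem_insert_erase_of_mem hq (by omega)) (mem_insert_erase_of_mem hp (by omega))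
      (notMem_insert_erase (by omega) (.inl hd)) he' hz'
  · exact .gap (mem_insert_self _ _) hv₀ (by omega) (notMem_insert_erase (by omega)
      H.add_one_notMem_or) (mem_insert_erase_of_mem hp (by omega)) (by omega) (by omega) he' hz'

theorem of_gap (H : ExchangeSetup r m k f g v₀ a b) {x y : ℕ} (hx : x ∈ f) (hx₁ : r + 1 ≤ x)
    (hx₂ : x ≤ r + m + 1) (hx1 : x + 1 ∉ f) (hy : y ∈ f) (hy₁ : x + 2 ≤ y) (hy₂ : y ≤ r + m + 4)
    (he : r + m + 5 ∉ f) (hz : r + m + 6 ∉ f) (hv₀ : r < v₀) :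
    ExchangeStep (chGens r m k) f g := by
  have hva := H.v₀_lt_a
  have hab := H.a_lt_b
  have hb := le_of_mem_chGens H.mem_f H.b_mem
  have hbe := ne_of_mem_of_not_mem H.b_mem he
  have hbz := ne_of_mem_of_not_mem H.b_mem hz
  have hxv := ne_of_mem_of_not_mem hx H.v₀_notMem
  have notMem : ∀ {u w}, w ≠ v₀ → w ∉ f → w ∉ insert v₀ (f.erase u) :=
    fun hwv hwf => notMem_insert_erase hwv (.inl hwf)
  rcases (by omega : v₀ < x ∨ v₀ = x + 1 ∨ x + 2 ≤ v₀) with hvx | rfl | hxv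
  · -- exchanging `x` for `v₀` opens a gap between `v₀` and `x`
    have hx' : x ∉ insert v₀ (f.erase x) := notMem_insert_erase hxv (.inr rfl)
    obtain ⟨x', hx', hvx', hx'x, hx'1⟩ :=
      exists_mem_add_one_notMem (mem_insert_self _ _) hx' hvx.le
    exact H.step H.v₀_mem H.v₀_notMem hx hvx <| .gap hx' (by omega) (by omega) hx'1
      (mem_insert_erase_of_mem hy (by omega)) (by omega) hy₂ (notMem (by omega) he)
      (notMem (by omega) hz)
  · by_cases hvq : x + 1 ≤ r + m + 1
    · exact H.step H.v₀_mem H.v₀_notMem H.a_mem hva <|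
        .gap (mem_insert_self _ _) (by omega) hvq
          (notMem_insert_erase (by omega) H.add_one_notMem_or)
          (mem_insert_erase_of_mem H.b_mem hab.ne') (by omega) (by omega) (notMem (by omega) he)
          (notMem (by omega) hz)
    · -- here `v₀ = q`, which forces `a = p` and `b = d`
      have hae := ne_of_mem_of_not_mem H.a_mem he
      exact H.step H.v₀_mem H.v₀_notMem H.b_mem (hva.trans hab) <| .qp
        (by rw [show r + m + 2 = x + 1 by omega]; exact mem_insert_self _ _)
        (by rw [show r + m + 3 = a by omega]; exact mem_insert_erase_of_mem H.a_mem hab.ne)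
        (notMem_insert_erase (by omega) (.inr (by omega))) (notMem (by omega) he)
        (notMem (by omega) hz)
  · have ha := le_of_mem_chGens H.mem_f H.a_mem
    have hae := ne_of_mem_of_not_mem H.a_mem he
    have haz := ne_of_mem_of_not_mem H.a_mem hz
    exact H.step H.v₀_mem H.v₀_notMem H.a_mem hva <|
      .gap (mem_insert_erase_of_mem hx (by omega)) hx₁ hx₂ (notMem (by omega) hx1)
        (mem_insert_self _ _) hxv (by omega) (notMem (by omega) he) (notMem (by omega) hz)

theorem of_first_of_v₀_eq (H : ExchangeSetup r m k f g (r + 2) a b) (hk : k ≠ m + 2)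
    (h1 : r + 1 ∈ f) (he : r + m + 5 ∈ f) (hz : r + m + 6 ∉ f) (hf : ∀ c ∈ f, r < c)
    (hg : ∀ w ∈ g, w ∉ f → w = r + 2 ∨ r + m + 5 ≤ w) : ExchangeStep (chGens r m k) f g := by
  set f' := insert (r + 2) (f.erase (r + m + 5))
  have hcard : f'.card = k + 2 := (card_insert_erase he H.v₀_notMem).trans H.mem_f.2.1
  by_cases hzg : r + m + 6 ∈ g
  · -- `pz` is the only type containing `z`
    have hpg : r + m + 3 ∈ g := by
      rcases H.mem_g.2.2 with ⟨hp, -⟩ | ⟨-, -, -, hz⟩ | ⟨-, -, -, -, -, -, hz⟩ |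
        ⟨-, -, -, -, hz⟩ | ⟨-, -, -, -, -, -, -, -, hz⟩
      · exact hp
      all_goals exact absurd hzg hz
    have hpf : r + m + 3 ∈ f := by
      by_contra hpf
      have := hg _ hpg hpf
      omega
    have hsub : f' ⊆ Icc (r + 1) (r + m + 4) := by
      refine insert_subset (mem_Icc.2 ⟨by omega, by omega⟩) fun x hx => ?_
      obtain ⟨hxe, hxf⟩ := mem_erase.1 hx
      have := hf x hxf
      have := le_of_mem_chGens H.mem_f hxf
      have := ne_of_mem_of_not_mem hxf hz
      exact mem_Icc.2 ⟨by omega, by omega⟩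
    exact H.step H.v₀_mem H.v₀_notMem he (by omega) <| chType_of_subset_Icc hsub
      (mem_insert_erase_of_mem h1 (by omega)) (mem_insert_erase_of_mem hpf (by omega))
      (by rw [hcard]; omega)
  · have heg : r + m + 5 ∉ g := fun heg => by
      rcases H.mem_g.2.2 with ⟨-, hz, -⟩ | ⟨-, h2, -⟩ | ⟨-, -, -, -, -, he, -⟩ |
        ⟨-, -, -, he, -⟩ | ⟨-, -, -, -, -, -, -, he, -⟩
      · exact hzg hz
      · exact h2 H.v₀_mem
      all_goals exact he heg
    have hgf' : g ⊆ f' := fun x hx => by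
      by_cases hxf : x ∈ f
      · exact mem_insert_erase_of_mem hxf (ne_of_mem_of_not_mem hx heg)
      · have := hg x hx hxf
        have := le_of_mem_chGens H.mem_g hx
        have := ne_of_mem_of_not_mem hx heg
        have := ne_of_mem_of_not_mem hx hzg
        obtain rfl : x = r + 2 := by omega
        exact mem_insert_self _ _
    have hgf : g = f' := eq_of_subset_of_card_le hgf' (hcard.trans H.mem_g.2.1.symm).le
    exact ⟨r + 2, H.v₀_mem, H.v₀_notMem, r + m + 5, he, by omega,
      show f' ∈ _ from hgf ▸ H.mem_g⟩

theorem of_first (H : ExchangeSetup r m k f g v₀ a b) (hk : k ≠ m + 2) (h1 : r + 1 ∈ f)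
    (h2 : r + 2 ∉ f) (he : r + m + 5 ∈ f) (hz : r + m + 6 ∉ f) :
    ExchangeStep (chGens r m k) f g := by
  have hva := H.v₀_lt_a
  have hab := H.a_lt_b
  have hb := le_of_mem_chGens H.mem_f H.b_mem
  have hbz := ne_of_mem_of_not_mem H.b_mem hz
  have hv₀1 := ne_of_mem_of_not_mem h1 H.v₀_notMem
  have hz' : ∀ {v}, v ≠ r + m + 6 → r + m + 6 ∉ insert v (f.erase (r + m + 5)) :=
    fun hv => notMem_insert_erase hv.symm (.inl hz)
  have he' : ∀ {v}, v ≠ r + m + 5 → r + m + 5 ∉ insert v (f.erase (r + m + 5)) :=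
    fun hv => notMem_insert_erase hv.symm (.inr rfl)
  have h1' : ∀ {v}, r + 1 ∈ insert v (f.erase (r + m + 5)) :=
    mem_insert_erase_of_mem h1 (by omega)
  by_cases hc : ∃ c ∈ insert v₀ (f.erase (r + m + 5)), c ≤ r
  · obtain ⟨c, hc, hcr⟩ := hc
    exact H.step H.v₀_mem H.v₀_notMem he (by omega) <|
      .clique hc hcr h1' le_rfl (by omega) (he' (by omega)) (hz' (by omega))
  by_cases hw : ∃ w ∈ g, w ∉ f ∧ r + 3 ≤ w ∧ w ≤ r + m + 4
  · obtain ⟨w, hwg, hwf, hw₁, hw₂⟩ := hw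
    exact H.step hwg hwf he (by omega) <| .gap h1' le_rfl (by omega)
      (notMem_insert_erase (by omega) (.inl h2)) (mem_insert_self _ _) hw₁ hw₂
      (he' (by omega)) (hz' (by omega))
  simp only [not_exists, not_and, not_le] at hc hw
  have hrv := hc v₀ (mem_insert_self _ _)
  have hgw : ∀ w ∈ g, w ∉ f → w = v₀ ∨ r + m + 5 ≤ w := fun w hwg hwf => by
    have hvw : v₀ ≤ w := le_of_not_gt fun h => hwf ((H.agree w h).1 hwg)
    have := hw w hwg hwf
    omega
  obtain rfl : v₀ = r + 2 := by
    have := hw v₀ H.v₀_mem H.v₀_notMem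
    omega
  refine H.of_first_of_v₀_eq hk h1 he hz (fun c hcf => ?_) hgw
  by_cases hce : c = r + m + 5
  · omega
  · exact hc c (mem_insert_erase_of_mem hcf hce)

end ExchangeSetup

theorem exchangeStep_chGens {r m k : ℕ} {f g : Finset ℕ} (hk : k ≠ m + 2)
    (hf : f ∈ chGens r m k) (hg : g ∈ chGens r m k) (hgf : lexGt g f) :
    ExchangeStep (chGens r m k) f g := by
  obtain ⟨v₀, hv₀g, hv₀f, hagree⟩ := (lexGt_iff_exists (hg.2.1.trans hf.2.1.symm)).1 hgf
  rcases exists_eq_insert_erase_or_lt_lt (hf.2.1.trans hg.2.1.symm) hv₀g hv₀f hagree with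
    ⟨u, hu, hvu, rfl⟩ | ⟨a, ha, b, hb, hva, hab, ha_le⟩
  · exact ⟨v₀, hv₀g, hv₀f, u, hu, hvu, hg⟩
  have H : ExchangeSetup r m k f g v₀ a b :=
    ⟨hf, hg, hv₀g, hv₀f, hagree, ha, hb, hva, hab, ha_le⟩
  rcases hf.2.2 with ⟨hp, hz, hd, he⟩ | ⟨h1, h2, he, hz⟩ | ⟨hc, hcr, hy, hy₁, hy₂, he, hz⟩ |
    ⟨hq, hp, hd, he, hz⟩ | ⟨hx, hx₁, hx₂, hx1, hy, hy₁, hy₂, he, hz⟩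
  · exact H.of_pz hp hz hd he
  · exact H.of_first hk h1 h2 he hz
  all_goals rcases le_or_gt v₀ r with hv₀ | hv₀
  · exact H.of_v₀_le he hz hy hy₁ hy₂ hv₀
  · exact H.of_clique hc hcr he hz hv₀
  · exact H.of_v₀_le he hz hq (by omega) (by omega) hv₀
  · exact H.of_qp hq hp hd he hz hv₀
  · exact H.of_v₀_le he hz hy (by omega) hy₂ hv₀
  · exact H.of_gap hx hx₁ hx₂ hx1 hy hy₁ hy₂ he hz hv₀

theorem CH_LQ_general (n r k : ℕ) (hn : 6 ≤ n) (hk3 : k ≠ n - 4) :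
    ∀ L : List (Finset ℕ), L.Nodup →
      (∀ h, h ∈ L ↔ h ∈ hsGens (CHedge n r) (Finset.Icc 1 (r + n)) k) →
      List.Pairwise lexGt L → LQList L := by
  obtain ⟨m, rfl⟩ : ∃ m, n = m + 6 := ⟨n - 6, by omega⟩
  intro L _ hL hsort
  rw [hsGens_chEdge] at hL
  exact lqList_of_exchangeStep hL hsort fun f hf g hg => exchangeStep_chGens (by omega) hf hg

/-- For `n ≥ 6`, `r ≥ 0` and `2 ≤ k ≤ r+n-4` with `k ≠ n-4`, the
ideal `HS_k(I(CH_{n,r}ᶜ))` has linear quotients with respect to the lex order induced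
by `x₁ > ⋯ > x_{r+n}`. -/
theorem CH_LQ (n r k : ℕ) (hn : 6 ≤ n) (hk1 : 2 ≤ k) (hk2 : k ≤ r + n - 4) (hk3 : k ≠ n - 4) :
    ∀ L : List (Finset ℕ), L.Nodup →
      (∀ h, h ∈ L ↔ h ∈ hsGens (CHedge n r) (Finset.Icc 1 (r + n)) k) →
      List.Pairwise lexGt L → LQList L :=
  CH_LQ_general n r k hn hk3
end
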